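/- arXiv:1804.10370 — 2 statements merged into one kernel-verified Lean document; each statement's English description precedes it below -/
import Mathlib

section
/- For every l ≥ 2, every n ≥ 1, and every centred Catalan set S of size n+1, there exists an (n,l)-AS-trapezoid A with S(A) = S such that for each 1 ≤ i ≤ n the number of 1's in the i-th row equals 1 + m_1(S) + ... + m_i(S); in particular, the number of (n,l)-AS-trapezoids with associated centred Catalan set S is positive for all l ≥ 2. -/
open Finset

/-- `S` is a centred Catalan set of size `n`: an `n`-subset of `{-n+1,…,n-1}` with
`|S ∩ {-i,…,i}| ≥ i+1` for all `0 ≤ i ≤ n-1`. -/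
def IsCCS (n : ℕ) (S : Finset ℤ) : Prop :=
  S.card = n ∧ (∀ x ∈ S, -(n : ℤ) + 1 ≤ x ∧ x ≤ (n : ℤ) - 1) ∧
  ∀ i : ℕ, i ≤ n - 1 → (i : ℤ) + 1 ≤ ((S ∩ Finset.Icc (-(i : ℤ)) (i : ℤ)).card : ℤ)

/-- The dilation operator `s_l`. -/
def dil (l : ℤ) (x : ℤ) : ℤ := if 0 < x then x + l else if x = 0 then 0 else x - l

/-- Concatenation `S1 ∘ S2 = S1 ∪ s_{|S1|-1}(S2)` of centred Catalan sets. -/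
def ccsConcat (S1 S2 : Finset ℤ) : Finset ℤ := S1 ∪ S2.image (dil ((S1.card : ℤ) - 1))

/-- A Dyck path: steps `±1`, nonnegative partial sums, total sum `0`. -/
def IsDyck (L : List ℤ) : Prop :=
  (∀ x ∈ L, x = 1 ∨ x = -1) ∧ (∀ k, 0 ≤ (L.take k).sum) ∧ L.sum = 0

/-- The `p`-th integer in the reading order `0, -1, 1, -2, 2, …, -n+1, n-1, n`. -/
def readOrder (n : ℕ) (p : ℕ) : ℤ :=
  if p = 2 * n - 1 then (n : ℤ)
  else if p % 2 = 1 then -(((p + 1) / 2 : ℕ) : ℤ) else ((p / 2 : ℕ) : ℤ)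

/-- The Dyck path `D(S)` associated with a centred Catalan set `S` of size `n`. -/
def toDyck (n : ℕ) (S : Finset ℤ) : List ℤ :=
  (List.range (2 * n)).map fun p => if readOrder n p ∈ S then (1 : ℤ) else -1

/-- A Motzkin path: steps in `{-1,0,1}`, nonnegative partial sums, total sum `0`. -/
def IsMotzkin (L : List ℤ) : Prop :=
  (∀ x ∈ L, x = -1 ∨ x = 0 ∨ x = 1) ∧ (∀ k, 0 ≤ (L.take k).sum) ∧ L.sum = 0

/-- The Motzkin path `M(S)` of a centred Catalan set `S` of size `n`:
its `i`-th step is `|{-i,i} ∩ S| - 1`. -/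
def motz (n : ℕ) (S : Finset ℤ) : List ℤ :=
  (List.range (n - 1)).map fun k =>
    ((S ∩ ({-((k : ℤ) + 1), (k : ℤ) + 1} : Finset ℤ)).card : ℤ) - 1

/-- The area enclosed between a Motzkin path and the x-axis
(sum of the trapezoid areas `(h_{j-1}+h_j)/2`, which for a path returning to the
x-axis equals the sum of the heights `h_0, …, h_{len-1}`). -/
def marea (L : List ℤ) : ℤ := ∑ j ∈ Finset.range L.length, (L.take j).sum

/-- In every row, consecutive nonzero entries alternate in sign. -/
def RowAlt (A : ℤ → ℤ → ℤ) : Prop :=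
  ∀ i j1 j2, j1 < j2 → A i j1 ≠ 0 → A i j2 ≠ 0 →
    (∀ j, j1 < j → j < j2 → A i j = 0) → A i j1 = -A i j2

/-- In every column, consecutive nonzero entries alternate in sign. -/
def ColAlt (A : ℤ → ℤ → ℤ) : Prop :=
  ∀ j i1 i2, i1 < i2 → A i1 j ≠ 0 → A i2 j ≠ 0 →
    (∀ i, i1 < i → i < i2 → A i j = 0) → A i1 j = -A i2 j

/-- In every column, the first nonzero entry from the top (rows are numbered from
the bottom, so the entry with the largest row index) is `1`. -/
def ColTopPos (A : ℤ → ℤ → ℤ) : Prop :=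
  ∀ i j, A i j ≠ 0 → (∀ i', i < i' → A i' j = 0) → A i j = 1

/-- An alternating sign triangle of order `n`, encoded as `A : ℤ → ℤ → ℤ` where
`A i j` is the entry in row `i` (from the bottom, `1 ≤ i ≤ n`) and column `j`
(`-i+1 ≤ j ≤ i-1`), with value `0` outside this range. -/
def IsAST (n : ℕ) (A : ℤ → ℤ → ℤ) : Prop :=
  (∀ i j, A i j ≠ 0 → 1 ≤ i ∧ i ≤ (n : ℤ) ∧ -i + 1 ≤ j ∧ j ≤ i - 1) ∧
  (∀ i j, A i j = -1 ∨ A i j = 0 ∨ A i j = 1) ∧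
  (∀ i : ℤ, 1 ≤ i → i ≤ (n : ℤ) → ∑ j ∈ Finset.Icc (-i + 1) (i - 1), A i j = 1) ∧
  RowAlt A ∧ ColAlt A ∧ ColTopPos A

/-- The set of column labels of an AST of order `n` with positive column-sum. -/
noncomputable def astCols (n : ℕ) (A : ℤ → ℤ → ℤ) : Finset ℤ :=
  (Finset.Icc (-(n : ℤ) + 1) ((n : ℤ) - 1)).filter fun j =>
    0 < ∑ i ∈ Finset.Icc (1 : ℤ) (n : ℤ), A i j

/-- An `(n,l)`-alternating sign trapezoid, encoded as `A : ℤ → ℤ → ℤ` where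
`A i j` is the entry in row `i` (from the bottom, `1 ≤ i ≤ n`) and column `j`
(`-i+1 ≤ j ≤ l+i-1`), with value `0` outside this range. -/
def IsASTrap (n l : ℕ) (A : ℤ → ℤ → ℤ) : Prop :=
  (∀ i j, A i j ≠ 0 → 1 ≤ i ∧ i ≤ (n : ℤ) ∧ -i + 1 ≤ j ∧ j ≤ (l : ℤ) + i - 1) ∧
  (∀ i j, A i j = -1 ∨ A i j = 0 ∨ A i j = 1) ∧
  (∀ i : ℤ, 1 ≤ i → i ≤ (n : ℤ) →
    ∑ j ∈ Finset.Icc (-i + 1) ((l : ℤ) + i - 1), A i j = 1) ∧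
  (∀ j : ℤ, 1 ≤ j → j ≤ (l : ℤ) - 1 → ∑ i ∈ Finset.Icc (1 : ℤ) (n : ℤ), A i j = 0) ∧
  RowAlt A ∧ ColAlt A ∧ ColTopPos A

/-- The centred Catalan set `S(A)` associated with an `(n,l)`-AS-trapezoid `A`:
take the columns with positive column-sum, subtract `1` from nonpositive labels,
subtract `l-1` from positive labels, and adjoin `0`. -/
noncomputable def trapCat (n l : ℕ) (A : ℤ → ℤ → ℤ) : Finset ℤ :=
  insert 0
    (((Finset.Icc (-(n : ℤ) + 1) ((l : ℤ) + n - 1)).filter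
        (fun j => 0 < ∑ i ∈ Finset.Icc (1 : ℤ) (n : ℤ), A i j)).image
      fun j => if j ≤ 0 then j - 1 else j - ((l : ℤ) - 1))

/-- `wS n l S`: the number of `(n,l)`-AS-trapezoids with associated centred
Catalan set `S`. -/
noncomputable def wS (n l : ℕ) (S : Finset ℤ) : ℕ :=
  Nat.card {A : ℤ → ℤ → ℤ // IsASTrap n l A ∧ trapCat n l A = S}

/-- `wM n l M`: the number of `(n,l)`-AS-trapezoids whose associated Motzkin path
is `M`. -/
noncomputable def wM (n l : ℕ) (M : List ℤ) : ℕ :=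
  Nat.card {A : ℤ → ℤ → ℤ // IsASTrap n l A ∧ motz (n + 1) (trapCat n l A) = M}

/-- Placing the trapezoid `A2` centred above the `n1`-row trapezoid `A1`. -/
def stack (n1 : ℕ) (A1 A2 : ℤ → ℤ → ℤ) : ℤ → ℤ → ℤ :=
  fun i j => if i ≤ (n1 : ℤ) then A1 i j else A2 (i - n1) (j + n1)


namespace Stmt11Aux
open Finset

lemma card_filter_eq (S : Finset ℤ) (a : ℤ) :
    ((S.filter (fun s => s = a)).card : ℤ) = if a ∈ S then 1 else 0 := by
  split_ifs with h
  · rw [show S.filter (fun s => s = a) = {a} by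
      ext x
      simp only [mem_filter, mem_singleton]
      constructor
      · rintro ⟨-, rfl⟩; rfl
      · rintro rfl; exact ⟨h, rfl⟩]
    simp
  · rw [show S.filter (fun s => s = a) = ∅ by
      ext x
      simp only [mem_filter, notMem_empty, iff_false, not_and]
      rintro hx rfl; exact h hx]
    simp

lemma card_filter_split (S : Finset ℤ) (P Q : ℤ → Prop) [DecidablePred P] [DecidablePred Q]
    (a : ℤ) (h : ∀ s, P s ↔ (Q s ∨ s = a)) (ha : ¬ Q a) :
    ((S.filter P).card : ℤ) = ((S.filter Q).card : ℤ) + (if a ∈ S then 1 else 0) := by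
  have h1 : S.filter P = S.filter Q ∪ S.filter (fun s => s = a) := by
    ext s
    simp only [mem_filter, mem_union, h s]
    tauto
  have h2 : Disjoint (S.filter Q) (S.filter (fun s => s = a)) := by
    rw [Finset.disjoint_left]
    rintro x hx hx'
    simp only [mem_filter] at hx hx'
    rcases hx' with ⟨-, rfl⟩
    exact ha hx.2
  rw [h1, Finset.card_union_of_disjoint h2, ← card_filter_eq S a]
  push_cast
  ring

/-- counts of negative elements -/
def dcnt (S : Finset ℤ) (m : ℤ) : ℤ := ((S.filter (fun s => -m ≤ s ∧ s ≤ -1)).card : ℤ)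

def ccnt (S : Finset ℤ) (m : ℤ) : ℤ := ((S.filter (fun s => -m ≤ s ∧ s ≤ m)).card : ℤ) - m

def bfun (S : Finset ℤ) (i : ℤ) : ℤ := i + 1 - 2 * dcnt S (i - 1)

def LC (S : Finset ℤ) (i j : ℤ) : ℤ := ((S.filter (fun s => s ≤ -i ∧ s + 1 ≤ j)).card : ℤ)

def RC (S : Finset ℤ) (l : ℕ) (i j : ℤ) : ℤ :=
  ((S.filter (fun s => i ≤ s ∧ s + l - 1 ≤ j)).card : ℤ)

def MC (S : Finset ℤ) (i j : ℤ) : ℤ :=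
  max 0 (min (ccnt S (i - 1) - 1) ((j - bfun S i) / 2 + 1))

def Nf (S : Finset ℤ) (l : ℕ) (i j : ℤ) : ℤ :=
  if 1 ≤ i then LC S i j + RC S l i j + MC S i j else 0

def stepf (S : Finset ℤ) (l : ℕ) (i j : ℤ) : ℤ := Nf S l i j - Nf S l i (j - 1)

def Af (S : Finset ℤ) (l n : ℕ) (i j : ℤ) : ℤ :=
  if 1 ≤ i ∧ i ≤ (n : ℤ) then stepf S l i j - stepf S l (i + 1) j else 0

lemma LC_step (S : Finset ℤ) (i j : ℤ) :
    LC S i j = LC S i (j - 1) + (if (j ≤ -i + 1 ∧ j - 1 ∈ S) then 1 else 0) := by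
  unfold LC
  by_cases hc : j - 1 ≤ -i
  · rw [card_filter_split S _ (fun s => s ≤ -i ∧ s + 1 ≤ j - 1) (j - 1) (fun s => by omega)
      (by omega)]
    rw [show (if (j ≤ -i + 1 ∧ j - 1 ∈ S) then (1:ℤ) else 0) = (if j - 1 ∈ S then (1:ℤ) else 0)
      from if_congr ⟨And.right, fun h => ⟨by omega, h⟩⟩ rfl rfl]
  · rw [show S.filter (fun s => s ≤ -i ∧ s + 1 ≤ j) = S.filter (fun s => s ≤ -i ∧ s + 1 ≤ j - 1) by
      apply filter_congr; intro s _; constructor <;> intro hs <;> exact ⟨hs.1, by omega⟩]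
    rw [if_neg (by omega)]
    ring

lemma RC_step (S : Finset ℤ) (l : ℕ) (i j : ℤ) :
    RC S l i j = RC S l i (j - 1) + (if ((l:ℤ) + i - 1 ≤ j ∧ j - l + 1 ∈ S) then 1 else 0) := by
  unfold RC
  by_cases hc : i ≤ j - l + 1
  · rw [card_filter_split S _ (fun s => i ≤ s ∧ s + l - 1 ≤ j - 1) (j - l + 1) (fun s => by omega)
      (by omega)]
    rw [show (if ((l:ℤ) + i - 1 ≤ j ∧ j - l + 1 ∈ S) then (1:ℤ) else 0)
        = (if j - (l:ℤ) + 1 ∈ S then (1:ℤ) else 0)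
      from if_congr ⟨And.right, fun h => ⟨by omega, h⟩⟩ rfl rfl]
  · rw [show S.filter (fun s => i ≤ s ∧ s + l - 1 ≤ j)
        = S.filter (fun s => i ≤ s ∧ s + l - 1 ≤ j - 1) by
      apply filter_congr; intro s _; constructor <;> intro hs <;> exact ⟨hs.1, by omega⟩]
    rw [if_neg (by omega)]
    ring

lemma MC_step (S : Finset ℤ) (i j : ℤ) :
    MC S i j = MC S i (j - 1)
      + (if (bfun S i ≤ j ∧ j ≤ bfun S i + 2 * ccnt S (i - 1) - 4 ∧ (j - bfun S i) % 2 = 0)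
          then 1 else 0) := by
  unfold MC
  split_ifs <;> omega

lemma step_eq (S : Finset ℤ) (l : ℕ) (i j : ℤ) (hi : 1 ≤ i) :
    stepf S l i j = (if (j ≤ -i + 1 ∧ j - 1 ∈ S) then 1 else 0)
      + (if ((l:ℤ) + i - 1 ≤ j ∧ j - (l:ℤ) + 1 ∈ S) then 1 else 0)
      + (if (bfun S i ≤ j ∧ j ≤ bfun S i + 2 * ccnt S (i - 1) - 4 ∧ (j - bfun S i) % 2 = 0)
          then 1 else 0) := by
  unfold stepf Nf
  simp only [if_pos hi]
  rw [LC_step, RC_step, MC_step]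
  ring

lemma LC_diff (S : Finset ℤ) (i j : ℤ) :
    LC S i j = LC S (i + 1) j + (if (-i ∈ S ∧ -i + 1 ≤ j) then 1 else 0) := by
  unfold LC
  by_cases hc : -i + 1 ≤ j
  · rw [card_filter_split S _ (fun s => s ≤ -(i + 1) ∧ s + 1 ≤ j) (-i) (fun s => by omega)
      (by omega)]
    rw [show (if (-i ∈ S ∧ -i + 1 ≤ j) then (1:ℤ) else 0) = (if -i ∈ S then (1:ℤ) else 0)
      from if_congr ⟨And.left, fun h => ⟨h, hc⟩⟩ rfl rfl]
  · rw [show S.filter (fun s => s ≤ -i ∧ s + 1 ≤ j)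
        = S.filter (fun s => s ≤ -(i + 1) ∧ s + 1 ≤ j) by
      apply filter_congr; intro s _; constructor <;> intro hs <;> exact ⟨by omega, hs.2⟩]
    rw [if_neg (by omega)]
    ring

lemma RC_diff (S : Finset ℤ) (l : ℕ) (i j : ℤ) :
    RC S l i j = RC S l (i + 1) j + (if (i ∈ S ∧ (l:ℤ) + i - 1 ≤ j) then 1 else 0) := by
  unfold RC
  by_cases hc : (l:ℤ) + i - 1 ≤ j
  · rw [card_filter_split S _ (fun s => i + 1 ≤ s ∧ s + l - 1 ≤ j) i (fun s => by omega)
      (by omega)]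
    rw [show (if (i ∈ S ∧ (l:ℤ) + i - 1 ≤ j) then (1:ℤ) else 0) = (if i ∈ S then (1:ℤ) else 0)
      from if_congr ⟨And.left, fun h => ⟨h, hc⟩⟩ rfl rfl]
  · rw [show S.filter (fun s => i ≤ s ∧ s + l - 1 ≤ j)
        = S.filter (fun s => i + 1 ≤ s ∧ s + l - 1 ≤ j) by
      apply filter_congr; intro s _; constructor <;> intro hs <;> exact ⟨by omega, hs.2⟩]
    rw [if_neg (by omega)]
    ring



variable {n : ℕ} {S : Finset ℤ}

lemma mem_bound (hS : IsCCS (n + 1) S) : ∀ s ∈ S, -(n:ℤ) ≤ s ∧ s ≤ n := by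
  intro s hs
  have := hS.2.1 s hs
  push_cast at this
  omega

lemma zero_mem (hS : IsCCS (n + 1) S) : (0:ℤ) ∈ S := by
  have h := hS.2.2 0 (by omega)
  have h2 : 0 < (S ∩ Finset.Icc (-(0:ℤ)) 0).card := by
    push_cast at h; omega
  obtain ⟨x, hx⟩ := Finset.card_pos.mp h2
  rw [Finset.mem_inter, Finset.mem_Icc] at hx
  have hx0 : x = 0 := by omega
  rw [← hx0]; exact hx.1

lemma inter_Icc_eq (S : Finset ℤ) (x y : ℤ) :
    S ∩ Finset.Icc x y = S.filter (fun s => x ≤ s ∧ s ≤ y) := by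
  ext s
  simp [Finset.mem_inter, Finset.mem_Icc, Finset.mem_filter]

lemma ccnt_ge_one (hS : IsCCS (n + 1) S) (m : ℤ) (h0 : 0 ≤ m) (h1 : m ≤ n) :
    1 ≤ ccnt S m := by
  have h := hS.2.2 m.toNat (by omega)
  rw [inter_Icc_eq] at h
  have hm : ((m.toNat : ℤ)) = m := Int.toNat_of_nonneg h0
  rw [hm] at h
  unfold ccnt
  omega

lemma ccnt_zero (hS : IsCCS (n + 1) S) : ccnt S 0 = 1 := by
  unfold ccnt
  rw [show S.filter (fun s => -0 ≤ s ∧ s ≤ 0) = {0} by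
    ext x
    simp only [mem_filter, mem_singleton]
    constructor
    · rintro ⟨hx, h1, h2⟩; omega
    · rintro rfl; exact ⟨zero_mem hS, by omega, le_rfl⟩]
  simp

lemma dcnt_le (S : Finset ℤ) (m : ℤ) (h : 0 ≤ m) : dcnt S m ≤ m := by
  unfold dcnt
  have hsub : S.filter (fun s => -m ≤ s ∧ s ≤ -1) ⊆ Finset.Icc (-m) (-1) := by
    intro x hx
    rw [Finset.mem_filter] at hx
    rw [Finset.mem_Icc]
    exact hx.2
  have := Finset.card_le_card hsub
  have hc := Int.card_Icc (-m) (-1)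
  omega

lemma dcnt_nonneg (S : Finset ℤ) (m : ℤ) : 0 ≤ dcnt S m := by
  unfold dcnt; positivity

lemma ccnt_le (S : Finset ℤ) (m : ℤ) (h : 0 ≤ m) : ccnt S m - 1 ≤ dcnt S m := by
  unfold ccnt dcnt
  have hsub : S.filter (fun s => -m ≤ s ∧ s ≤ m)
      ⊆ (S.filter (fun s => -m ≤ s ∧ s ≤ -1)) ∪ Finset.Icc 0 m := by
    intro x hx
    rw [Finset.mem_filter] at hx
    rw [Finset.mem_union, Finset.mem_filter, Finset.mem_Icc]
    rcases hx with ⟨hxS, h1, h2⟩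
    by_cases hx0 : x ≤ -1
    · exact Or.inl ⟨hxS, h1, hx0⟩
    · exact Or.inr ⟨by omega, h2⟩
  have h1 := Finset.card_le_card hsub
  have h2 := Finset.card_union_le (S.filter (fun s => -m ≤ s ∧ s ≤ -1)) (Finset.Icc (0:ℤ) m)
  have hc := Int.card_Icc (0:ℤ) m
  omega

lemma ccnt_le_tot (hS : IsCCS (n + 1) S) (m : ℤ) : ccnt S m ≤ (n:ℤ) + 1 - m := by
  unfold ccnt
  have := Finset.card_le_card (Finset.filter_subset (fun s => -m ≤ s ∧ s ≤ m) S)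
  have h1 := hS.1
  omega

lemma dcnt_rec (S : Finset ℤ) (m : ℤ) (hm : 1 ≤ m) :
    dcnt S m = dcnt S (m - 1) + (if -m ∈ S then 1 else 0) := by
  unfold dcnt
  rw [card_filter_split S _ (fun s => -(m - 1) ≤ s ∧ s ≤ -1) (-m) (fun s => by omega) (by omega)]

lemma ccnt_rec (S : Finset ℤ) (m : ℤ) (hm : 1 ≤ m) :
    ccnt S m = ccnt S (m - 1) - 1 + (if -m ∈ S then 1 else 0) + (if m ∈ S then 1 else 0) := by
  unfold ccnt
  rw [card_filter_split S _ (fun s => -(m - 1) ≤ s ∧ s ≤ m) (-m) (fun s => by omega) (by omega)]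
  rw [card_filter_split S (fun s => -(m - 1) ≤ s ∧ s ≤ m) (fun s => -(m - 1) ≤ s ∧ s ≤ m - 1) m
    (fun s => by omega) (by omega)]
  ring

lemma pair_card (S : Finset ℤ) (m : ℤ) (hm : 1 ≤ m) :
    ((S ∩ ({-m, m} : Finset ℤ)).card : ℤ)
      = (if -m ∈ S then 1 else 0) + (if m ∈ S then 1 else 0) := by
  rw [show S ∩ ({-m, m} : Finset ℤ) = S.filter (fun s => s = -m ∨ s = m) by
    ext x
    simp only [Finset.mem_inter, Finset.mem_insert, Finset.mem_singleton, Finset.mem_filter]]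
  rw [card_filter_split S _ (fun s => s = m) (-m) (fun s => by tauto) (by omega)]
  rw [card_filter_eq]
  ring

lemma bfun_ge (S : Finset ℤ) (i : ℤ) (hi : 1 ≤ i) : -i + 3 ≤ bfun S i := by
  unfold bfun
  have := dcnt_le S (i - 1) (by omega)
  omega

lemma top_le (S : Finset ℤ) (i : ℤ) (hi : 1 ≤ i) :
    bfun S i + 2 * ccnt S (i - 1) - 4 ≤ i - 1 := by
  unfold bfun
  have := ccnt_le S (i - 1) (by omega)
  omega

lemma brel (S : Finset ℤ) (i : ℤ) (hi : 1 ≤ i) :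
    bfun S (i + 1) = bfun S i + 1 - 2 * (if -i ∈ S then 1 else 0) := by
  unfold bfun
  have h : i + 1 - 1 = i := by ring
  rw [h]
  have := dcnt_rec S i hi
  split_ifs at this ⊢ <;> omega

lemma crel (S : Finset ℤ) (i : ℤ) (hi : 1 ≤ i) :
    ccnt S i = ccnt S (i - 1) - 1 + (if -i ∈ S then 1 else 0) + (if i ∈ S then 1 else 0) :=
  ccnt_rec S i hi

end Stmt11Aux

section
open Finset
namespace Stmt11Aux

variable {n : ℕ} {S : Finset ℤ}

lemma step01 (S : Finset ℤ) (l : ℕ) (hl : 2 ≤ l) (i j : ℤ) :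
    stepf S l i j = 0 ∨ stepf S l i j = 1 := by
  by_cases hi : 1 ≤ i
  · rw [step_eq S l i j hi]
    have hb := bfun_ge S i hi
    have ht := top_le S i hi
    by_cases hs1 : j - 1 ∈ S <;> by_cases hs2 : j - (l:ℤ) + 1 ∈ S <;>
      simp only [hs1, hs2, and_true, and_false, if_false, if_true] <;> split_ifs <;> omega
  · left
    unfold stepf Nf
    simp only [if_neg hi]
    norm_num

lemma step_zero_top (hS : IsCCS (n + 1) S) (l : ℕ) (i j : ℤ) (hi : (n:ℤ) + 1 ≤ i) :
    stepf S l i j = 0 := by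
  have hi1 : 1 ≤ i := by omega
  rw [step_eq S l i j hi1]
  have hA : ¬(j ≤ -i + 1 ∧ j - 1 ∈ S) := by
    rintro ⟨h1, h2⟩; have := mem_bound hS _ h2; omega
  have hB : ¬((l:ℤ) + i - 1 ≤ j ∧ j - (l:ℤ) + 1 ∈ S) := by
    rintro ⟨h1, h2⟩; have := mem_bound hS _ h2; omega
  have hC : ¬(bfun S i ≤ j ∧ j ≤ bfun S i + 2 * ccnt S (i - 1) - 4 ∧ (j - bfun S i) % 2 = 0) := by
    rintro ⟨h1, h2, h3⟩
    have hc := ccnt_le_tot hS (i - 1)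
    omega
  rw [if_neg hA, if_neg hB, if_neg hC]
  norm_num

lemma step_outside (S : Finset ℤ) (l : ℕ) (hl : 2 ≤ l) (i j : ℤ) (hi : 1 ≤ i)
    (hj : j ≤ -i ∨ (l:ℤ) + i ≤ j) : stepf S l i j = stepf S l (i + 1) j := by
  rw [step_eq S l i j hi, step_eq S l (i + 1) j (by omega)]
  have hb := bfun_ge S i hi
  have hb1 := bfun_ge S (i + 1) (by omega)
  have ht := top_le S i hi
  have ht1 := top_le S (i + 1) (by omega)
  by_cases hs1 : j - 1 ∈ S <;> by_cases hs2 : j - (l:ℤ) + 1 ∈ S <;>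
    simp only [hs1, hs2, and_true, and_false, if_false, if_true] <;> split_ifs <;> omega

lemma R_eq (S : Finset ℤ) (l : ℕ) (i j : ℤ) (hi : 1 ≤ i) :
    Nf S l i j - Nf S l (i + 1) j
      = (if (-i ∈ S ∧ -i + 1 ≤ j) then 1 else 0)
        + (if (i ∈ S ∧ (l:ℤ) + i - 1 ≤ j) then 1 else 0)
        + MC S i j - MC S (i + 1) j := by
  unfold Nf
  rw [if_pos hi, if_pos (by omega : (1:ℤ) ≤ i + 1)]
  rw [LC_diff S i j, RC_diff S l i j]
  ring

lemma R01 (hS : IsCCS (n + 1) S) (l : ℕ) (hl : 2 ≤ l) (i j : ℤ) (hi : 1 ≤ i)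
    (hin : i ≤ (n:ℤ)) :
    0 ≤ Nf S l i j - Nf S l (i + 1) j ∧ Nf S l i j - Nf S l (i + 1) j ≤ 1 := by
  rw [R_eq S l i j hi]
  have hb := bfun_ge S i hi
  have hb1 := bfun_ge S (i + 1) (by omega)
  have ht := top_le S i hi
  have ht1 := top_le S (i + 1) (by omega)
  have hbrel := brel S i hi
  have hcrel := crel S i hi
  have hc0 := ccnt_ge_one hS (i - 1) (by omega) (by omega)
  have hc1 := ccnt_ge_one hS i (by omega) hin
  unfold MC
  simp only [add_sub_cancel_right] at ht1 ⊢
  by_cases hs1 : -i ∈ S <;> by_cases hs2 : i ∈ S <;>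
    simp only [hs1, hs2, and_true, and_false, if_false, if_true, true_and,
      false_and] at hbrel hcrel ⊢ <;>
    constructor <;> (try split_ifs) <;> omega

lemma R_bot (S : Finset ℤ) (l : ℕ) (hl : 2 ≤ l) (i : ℤ) (hi : 1 ≤ i) :
    Nf S l i (-i) - Nf S l (i + 1) (-i) = 0 := by
  rw [R_eq S l i (-i) hi]
  have hb := bfun_ge S i hi
  have hb1 := bfun_ge S (i + 1) (by omega)
  rw [if_neg (by rintro ⟨-, h⟩; omega), if_neg (by rintro ⟨-, h⟩; omega)]
  unfold MC
  omega

lemma R_top (hS : IsCCS (n + 1) S) (l : ℕ) (hl : 2 ≤ l) (i : ℤ) (hi : 1 ≤ i)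
    (hin : i ≤ (n:ℤ)) :
    Nf S l i ((l:ℤ) + i - 1) - Nf S l (i + 1) ((l:ℤ) + i - 1) = 1 := by
  rw [R_eq S l i ((l:ℤ) + i - 1) hi]
  have hb := bfun_ge S i hi
  have hb1 := bfun_ge S (i + 1) (by omega)
  have ht := top_le S i hi
  have ht1 := top_le S (i + 1) (by omega)
  have hbrel := brel S i hi
  have hcrel := crel S i hi
  have hc0 := ccnt_ge_one hS (i - 1) (by omega) (by omega)
  have hc1 := ccnt_ge_one hS i (by omega) hin
  unfold MC
  simp only [add_sub_cancel_right] at ht1 ⊢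
  by_cases hs1 : -i ∈ S <;> by_cases hs2 : i ∈ S <;>
    simp only [hs1, hs2, and_true, and_false, if_false, if_true, true_and,
      false_and] at hbrel hcrel ⊢ <;>
    (try split_ifs) <;> omega

lemma Icc_telescope (f : ℤ → ℤ) (a : ℤ) : ∀ b, a - 1 ≤ b →
    ∑ j ∈ Finset.Icc a b, (f j - f (j - 1)) = f b - f (a - 1) := by
  refine Int.le_induction ?_ ?_
  · rw [Finset.Icc_eq_empty (by omega)]
    simp
  · intro b hb ih
    rw [show Finset.Icc a (b + 1) = insert (b + 1) (Finset.Icc a b) by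
      ext x; simp only [Finset.mem_Icc, Finset.mem_insert]; omega]
    rw [Finset.sum_insert (by simp only [Finset.mem_Icc]; omega), ih]
    rw [show b + 1 - 1 = b from by ring]
    ring

lemma Icc_telescope' (g : ℤ → ℤ) (a : ℤ) : ∀ b, a - 1 ≤ b →
    ∑ i ∈ Finset.Icc a b, (g i - g (i + 1)) = g a - g (b + 1) := by
  refine Int.le_induction ?_ ?_
  · rw [Finset.Icc_eq_empty (by omega)]
    rw [show a - 1 + 1 = a from by ring]
    simp
  · intro b hb ih
    rw [show Finset.Icc a (b + 1) = insert (b + 1) (Finset.Icc a b) by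
      ext x; simp only [Finset.mem_Icc, Finset.mem_insert]; omega]
    rw [Finset.sum_insert (by simp only [Finset.mem_Icc]; omega), ih]
    ring

lemma Af_eq (S : Finset ℤ) (l n : ℕ) (i j : ℤ) (h1 : 1 ≤ i) (h2 : i ≤ (n:ℤ)) :
    Af S l n i j = stepf S l i j - stepf S l (i + 1) j := by
  unfold Af
  rw [if_pos ⟨h1, h2⟩]

lemma Af_eq_R (S : Finset ℤ) (l n : ℕ) (i j : ℤ) (h1 : 1 ≤ i) (h2 : i ≤ (n:ℤ)) :
    Af S l n i j = (Nf S l i j - Nf S l (i + 1) j) - (Nf S l i (j - 1) - Nf S l (i + 1) (j - 1)) := by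
  rw [Af_eq S l n i j h1 h2]
  unfold stepf
  ring

end Stmt11Aux
end



section
open Finset
namespace Stmt11Aux

variable {n : ℕ} {S : Finset ℤ}

lemma Af_val (S : Finset ℤ) (l n : ℕ) (hl : 2 ≤ l) :
    ∀ i j, Af S l n i j = -1 ∨ Af S l n i j = 0 ∨ Af S l n i j = 1 := by
  intro i j
  unfold Af
  split
  · rcases step01 S l hl i j with h1|h1 <;> rcases step01 S l hl (i+1) j with h2|h2 <;> omega
  · tauto

lemma Af_support (S : Finset ℤ) (l n : ℕ) (hl : 2 ≤ l) : ∀ i j, Af S l n i j ≠ 0 →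
    1 ≤ i ∧ i ≤ (n:ℤ) ∧ -i + 1 ≤ j ∧ j ≤ (l:ℤ) + i - 1 := by
  intro i j hne
  by_cases hg : 1 ≤ i ∧ i ≤ (n:ℤ)
  · refine ⟨hg.1, hg.2, ?_, ?_⟩ <;> by_contra hj
    · exact hne (by
        rw [Af_eq S l n i j hg.1 hg.2, step_outside S l hl i j hg.1 (Or.inl (by omega)), sub_self])
    · exact hne (by
        rw [Af_eq S l n i j hg.1 hg.2, step_outside S l hl i j hg.1 (Or.inr (by omega)), sub_self])
  · exact absurd (by unfold Af; rw [if_neg hg]) hne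

lemma Af_rowsum (hS : IsCCS (n + 1) S) (l : ℕ) (hl : 2 ≤ l) (i : ℤ) (h1 : 1 ≤ i)
    (h2 : i ≤ (n:ℤ)) :
    ∑ j ∈ Finset.Icc (-i + 1) ((l:ℤ) + i - 1), Af S l n i j = 1 := by
  have hcong : ∀ j ∈ Finset.Icc (-i+1) ((l:ℤ)+i-1), Af S l n i j
      = (fun j => Nf S l i j - Nf S l (i+1) j) j - (fun j => Nf S l i j - Nf S l (i+1) j) (j-1) :=
    fun j _ => Af_eq_R S l n i j h1 h2
  rw [Finset.sum_congr rfl hcong, Icc_telescope _ _ _ (by omega)]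
  rw [show -i + 1 - 1 = -i from by ring]
  rw [R_top hS l hl i h1 h2, R_bot S l hl i h1]
  ring

lemma colsum (hS : IsCCS (n + 1) S) (l : ℕ) (hl : 2 ≤ l) (j : ℤ) :
    ∑ i ∈ Finset.Icc (1:ℤ) (n:ℤ), Af S l n i j = stepf S l 1 j := by
  have hcong : ∀ i ∈ Finset.Icc (1:ℤ) (n:ℤ), Af S l n i j
      = (fun i => stepf S l i j) i - (fun i => stepf S l i j) (i+1) := by
    intro i hi
    rw [Finset.mem_Icc] at hi
    exact Af_eq S l n i j hi.1 hi.2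
  rw [Finset.sum_congr rfl hcong, Icc_telescope' _ _ _ (by omega)]
  rw [step_zero_top hS l ((n:ℤ)+1) j le_rfl]
  ring

lemma step_one_eq (hS : IsCCS (n + 1) S) (l : ℕ) (j : ℤ) :
    stepf S l 1 j = (if (j ≤ 0 ∧ j - 1 ∈ S) then 1 else 0)
      + (if ((l:ℤ) ≤ j ∧ j - (l:ℤ) + 1 ∈ S) then 1 else 0) := by
  rw [step_eq S l 1 j le_rfl]
  have hc : ccnt S (1 - 1) = 1 := by
    rw [show (1:ℤ) - 1 = 0 from by ring]
    exact ccnt_zero hS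
  rw [if_neg (show ¬(bfun S 1 ≤ j ∧ j ≤ bfun S 1 + 2 * ccnt S (1 - 1) - 4 ∧
      (j - bfun S 1) % 2 = 0) from by rintro ⟨ha, hb, -⟩; omega)]
  simp only [show (-1:ℤ) + 1 = 0 from by norm_num, show (l:ℤ) + 1 - 1 = (l:ℤ) from by ring]
  ring

lemma colsum_central (hS : IsCCS (n + 1) S) (l : ℕ) (hl : 2 ≤ l) (j : ℤ) (h1 : 1 ≤ j)
    (h2 : j ≤ (l:ℤ) - 1) :
    ∑ i ∈ Finset.Icc (1:ℤ) (n:ℤ), Af S l n i j = 0 := by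
  rw [colsum hS l hl j, step_one_eq hS l j, if_neg (by rintro ⟨h,-⟩; omega),
    if_neg (by rintro ⟨h,-⟩; omega)]
  norm_num

lemma Af_rowalt (hS : IsCCS (n + 1) S) (l : ℕ) (hl : 2 ≤ l) : RowAlt (Af S l n) := by
  intro i j1 j2 hlt h1 h2 hz
  obtain ⟨hg1, hg2, -, -⟩ := Af_support S l n hl i j1 h1
  set R : ℤ → ℤ := fun j => Nf S l i j - Nf S l (i+1) j with hR
  have hAR : ∀ j, Af S l n i j = R j - R (j - 1) := fun j => Af_eq_R S l n i j hg1 hg2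
  have h01 : ∀ j, 0 ≤ R j ∧ R j ≤ 1 := fun j => R01 hS l hl i j hg1 hg2
  have htel : R (j2 - 1) = R j1 := by
    have hsum : ∑ j ∈ Finset.Icc (j1+1) (j2-1), (R j - R (j-1)) = R (j2-1) - R (j1+1-1) :=
      Icc_telescope R (j1+1) (j2-1) (by omega)
    have hzero : ∑ j ∈ Finset.Icc (j1+1) (j2-1), (R j - R (j-1)) = 0 := by
      apply Finset.sum_eq_zero
      intro j hj
      rw [Finset.mem_Icc] at hj
      rw [← hAR j]
      exact hz j (by omega) (by omega)
    rw [hzero] at hsum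
    rw [show j1 + 1 - 1 = j1 from by ring] at hsum
    omega
  have e1 := hAR j1
  have e2 := hAR j2
  have b1 := h01 j1
  have b2 := h01 (j1 - 1)
  have b3 := h01 j2
  have b4 := h01 (j2 - 1)
  rw [e1] at h1 ⊢
  rw [e2] at h2 ⊢
  omega

lemma Af_colalt (hS : IsCCS (n + 1) S) (l : ℕ) (hl : 2 ≤ l) : ColAlt (Af S l n) := by
  intro j i1 i2 hlt h1 h2 hz
  obtain ⟨hg1, hg2, -, -⟩ := Af_support S l n hl i1 j h1
  obtain ⟨hg3, hg4, -, -⟩ := Af_support S l n hl i2 j h2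
  have htel : stepf S l (i1+1) j = stepf S l i2 j := by
    have hsum := Icc_telescope' (fun i => stepf S l i j) (i1+1) (i2-1) (by omega)
    have hzero : ∑ i ∈ Finset.Icc (i1+1) (i2-1),
        ((fun i => stepf S l i j) i - (fun i => stepf S l i j) (i+1)) = 0 := by
      apply Finset.sum_eq_zero
      intro i hi
      rw [Finset.mem_Icc] at hi
      simp only
      rw [← Af_eq S l n i j (by omega) (by omega)]
      exact hz i (by omega) (by omega)
    rw [hzero] at hsum
    rw [show i2 - 1 + 1 = i2 from by ring] at hsum
    omega
  rw [Af_eq S l n i1 j hg1 hg2] at h1 ⊢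
  rw [Af_eq S l n i2 j hg3 hg4] at h2 ⊢
  rcases step01 S l hl i1 j with a1|a1 <;> rcases step01 S l hl (i1+1) j with a2|a2 <;>
    rcases step01 S l hl i2 j with a3|a3 <;> rcases step01 S l hl (i2+1) j with a4|a4 <;> omega

lemma Af_coltop (hS : IsCCS (n + 1) S) (l : ℕ) (hl : 2 ≤ l) : ColTopPos (Af S l n) := by
  intro i j hne hz
  obtain ⟨hg1, hg2, -, -⟩ := Af_support S l n hl i j hne
  have htel : stepf S l (i+1) j = 0 := by
    have hsum := Icc_telescope' (fun i => stepf S l i j) (i+1) ((n:ℤ)) (by omega)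
    have hzero : ∑ i' ∈ Finset.Icc (i+1) ((n:ℤ)),
        ((fun i => stepf S l i j) i' - (fun i => stepf S l i j) (i'+1)) = 0 := by
      apply Finset.sum_eq_zero
      intro i' hi'
      rw [Finset.mem_Icc] at hi'
      simp only
      rw [← Af_eq S l n i' j (by omega) hi'.2]
      exact hz i' (by omega)
    rw [hzero] at hsum
    rw [step_zero_top hS l ((n:ℤ)+1) j le_rfl] at hsum
    omega
  rw [Af_eq S l n i j hg1 hg2] at hne ⊢
  rcases step01 S l hl i j with a|a <;> omega

lemma Af_trapcat (hS : IsCCS (n + 1) S) (l : ℕ) (hl : 2 ≤ l) :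
    trapCat n l (Af S l n) = S := by
  have hcol : ∀ j : ℤ, (0 < ∑ i ∈ Finset.Icc (1:ℤ) (n:ℤ), Af S l n i j)
      ↔ ((j ≤ 0 ∧ j - 1 ∈ S) ∨ ((l:ℤ) ≤ j ∧ j - (l:ℤ) + 1 ∈ S)) := by
    intro j
    rw [colsum hS l hl j, step_one_eq hS l j]
    constructor
    · intro h
      split_ifs at h with hA hB <;>
        first
          | exact Or.inl hA
          | exact Or.inr ‹_›
          | exact absurd h (by norm_num)
    · intro h
      rcases h with h | h
      · rw [if_pos h]
        split_ifs <;> norm_num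
      · rw [if_pos h]
        split_ifs <;> norm_num
  unfold trapCat
  ext x
  simp only [Finset.mem_insert, Finset.mem_image, Finset.mem_filter, Finset.mem_Icc]
  constructor
  · rintro (rfl | ⟨j, ⟨⟨hj1, hj2⟩, hpos⟩, rfl⟩)
    · exact zero_mem hS
    · rw [hcol j] at hpos
      rcases hpos with ⟨hj0, hmem⟩ | ⟨hjl, hmem⟩
      · rw [if_pos hj0]
        exact hmem
      · rw [if_neg (by omega)]
        rw [show j - ((l:ℤ) - 1) = j - (l:ℤ) + 1 from by ring]
        exact hmem
  · intro hx
    rcases eq_or_ne x 0 with rfl | hx0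
    · exact Or.inl rfl
    right
    obtain ⟨hb1, hb2⟩ := mem_bound hS x hx
    rcases hx0.lt_or_gt with hneg | hpos
    · refine ⟨x + 1, ⟨⟨by omega, by omega⟩, (hcol _).mpr (Or.inl ⟨by omega, ?_⟩)⟩, ?_⟩
      · rw [show x + 1 - 1 = x from by ring]
        exact hx
      · rw [if_pos (by omega : x + 1 ≤ 0)]
        ring
    · refine ⟨x + (l:ℤ) - 1, ⟨⟨by omega, by omega⟩, (hcol _).mpr (Or.inr ⟨by omega, ?_⟩)⟩, ?_⟩
      · rw [show x + (l:ℤ) - 1 - (l:ℤ) + 1 = x from by ring]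
        exact hx
      · rw [if_neg (by omega)]
        ring

lemma ones_iff (hS : IsCCS (n + 1) S) (l : ℕ) (hl : 2 ≤ l) (i j : ℤ) (hi1 : 1 ≤ i)
    (hi2 : i ≤ (n:ℤ)) :
    Af S l n i j = 1 ↔ ((j = -i + 1 ∧ j - 1 ∈ S)
      ∨ (bfun S i ≤ j ∧ j ≤ bfun S i + 2 * ccnt S (i-1) - 4 ∧ (j - bfun S i) % 2 = 0)
      ∨ (j = (l:ℤ) + i - 1 ∧ j - (l:ℤ) + 1 ∈ S)) := by
  rw [Af_eq S l n i j hi1 hi2, step_eq S l i j hi1, step_eq S l (i+1) j (by omega)]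
  have hb := bfun_ge S i hi1
  have hb1 := bfun_ge S (i + 1) (by omega)
  have ht := top_le S i hi1
  have ht1 := top_le S (i + 1) (by omega)
  have hbrel := brel S i hi1
  have hcrel := crel S i hi1
  have hc0 := ccnt_ge_one hS (i-1) (by omega) (by omega)
  have hc1 := ccnt_ge_one hS i (by omega) hi2
  simp only [add_sub_cancel_right] at ht1 ⊢
  by_cases hs1 : j - 1 ∈ S <;> by_cases hs2 : j - (l:ℤ) + 1 ∈ S <;> by_cases hs0 : -i ∈ S <;>
    by_cases hs3 : i ∈ S <;>
    simp only [hs1, hs2, hs0, hs3, and_true, and_false, if_false, if_true, true_and,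
      false_and, or_false, false_or] at hbrel hcrel ⊢ <;>
    (try split_ifs) <;> omega

lemma ones_set (hS : IsCCS (n + 1) S) (l : ℕ) (hl : 2 ≤ l) (i : ℤ) (hi1 : 1 ≤ i)
    (hi2 : i ≤ (n:ℤ)) :
    (Finset.Icc (-i + 1) ((l:ℤ) + i - 1)).filter (fun j => Af S l n i j = 1)
      = ((if (-i) ∈ S then ({-i + 1} : Finset ℤ) else ∅)
          ∪ (Finset.Icc (1:ℤ) (ccnt S (i-1) - 1)).image (fun t => bfun S i + 2*t - 2))
        ∪ (if i ∈ S then ({(l:ℤ) + i - 1} : Finset ℤ) else ∅) := by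
  have hb := bfun_ge S i hi1
  have ht := top_le S i hi1
  ext j
  simp only [Finset.mem_filter, Finset.mem_Icc, Finset.mem_union, Finset.mem_image]
  rw [ones_iff hS l hl i j hi1 hi2]
  constructor
  · rintro ⟨⟨hj1, hj2⟩, hcase⟩
    rcases hcase with ⟨hje, hjm⟩ | hmid | ⟨hje, hjm⟩
    · left; left
      rw [if_pos (show -i ∈ S from by rw [show -i = j - 1 from by omega]; exact hjm)]
      simp only [Finset.mem_singleton]
      omega
    · left; right
      exact ⟨(j - bfun S i)/2 + 1, by omega, by omega⟩
    · right
      rw [if_pos (show i ∈ S from by rw [show i = j - (l:ℤ) + 1 from by omega]; exact hjm)]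
      simp only [Finset.mem_singleton]
      omega
  · intro h
    rcases h with (h | ⟨t, htm, rfl⟩) | h
    · split_ifs at h with hs
      · rw [Finset.mem_singleton] at h
        subst h
        refine ⟨⟨le_rfl, by omega⟩, Or.inl ⟨rfl, ?_⟩⟩
        rw [show -i + 1 - 1 = -i from by ring]
        exact hs
      · exact absurd h (Finset.notMem_empty _)
    · exact ⟨⟨by omega, by omega⟩, Or.inr (Or.inl ⟨by omega, by omega, by omega⟩)⟩
    · split_ifs at h with hs
      · rw [Finset.mem_singleton] at h
        subst h
        refine ⟨⟨by omega, le_rfl⟩, Or.inr (Or.inr ⟨rfl, ?_⟩)⟩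
        rw [show (l:ℤ) + i - 1 - (l:ℤ) + 1 = i from by ring]
        exact hs
      · exact absurd h (Finset.notMem_empty _)

lemma ones_card (hS : IsCCS (n + 1) S) (l : ℕ) (hl : 2 ≤ l) (i : ℤ) (hi1 : 1 ≤ i)
    (hi2 : i ≤ (n:ℤ)) :
    ((((Finset.Icc (-i + 1) ((l:ℤ) + i - 1)).filter (fun j => Af S l n i j = 1)).card : ℤ))
      = ccnt S i := by
  rw [ones_set hS l hl i hi1 hi2]
  have hb := bfun_ge S i hi1
  have ht := top_le S i hi1
  have hc0 := ccnt_ge_one hS (i-1) (by omega) (by omega)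
  have hd1 : Disjoint ((if (-i) ∈ S then ({-i + 1} : Finset ℤ) else ∅))
      ((Finset.Icc (1:ℤ) (ccnt S (i-1) - 1)).image (fun t => bfun S i + 2*t - 2)) := by
    rw [Finset.disjoint_left]
    intro x hx hx'
    rw [Finset.mem_image] at hx'
    obtain ⟨t, htm, rfl⟩ := hx'
    rw [Finset.mem_Icc] at htm
    split_ifs at hx with hs
    · rw [Finset.mem_singleton] at hx
      omega
    · exact absurd hx (Finset.notMem_empty _)
  have hd2 : Disjoint (((if (-i) ∈ S then ({-i + 1} : Finset ℤ) else ∅))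
        ∪ (Finset.Icc (1:ℤ) (ccnt S (i-1) - 1)).image (fun t => bfun S i + 2*t - 2))
      (if i ∈ S then ({(l:ℤ) + i - 1} : Finset ℤ) else ∅) := by
    rw [Finset.disjoint_right]
    intro x hx hx'
    split_ifs at hx with hs
    · rw [Finset.mem_singleton] at hx
      subst hx
      rw [Finset.mem_union] at hx'
      rcases hx' with hx' | hx'
      · split_ifs at hx' with hs2
        · rw [Finset.mem_singleton] at hx'
          omega
        · exact absurd hx' (Finset.notMem_empty _)
      · rw [Finset.mem_image] at hx'
        obtain ⟨t, htm, he⟩ := hx'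
        rw [Finset.mem_Icc] at htm
        omega
    · exact absurd hx (Finset.notMem_empty _)
  rw [Finset.card_union_of_disjoint hd2, Finset.card_union_of_disjoint hd1]
  rw [Finset.card_image_of_injective _ (show Function.Injective (fun t => bfun S i + 2*t - 2)
    from fun a b h => by simp only at h; omega)]
  have hcicc : ((Finset.Icc (1:ℤ) (ccnt S (i-1) - 1)).card : ℤ) = ccnt S (i-1) - 1 := by
    rw [Int.card_Icc]
    omega
  have hca : (((if (-i) ∈ S then ({-i + 1} : Finset ℤ) else ∅)).card : ℤ)
      = if (-i) ∈ S then 1 else 0 := by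
    split_ifs <;> simp
  have hcb : (((if i ∈ S then ({(l:ℤ) + i - 1} : Finset ℤ) else ∅)).card : ℤ)
      = if i ∈ S then 1 else 0 := by
    split_ifs <;> simp
  have hcrel := crel S i hi1
  push_cast
  rw [hca, hcb, hcicc, hcrel]
  ring

lemma coe_range (m : ℕ) : (do let a ← List.range m; pure ((a:ℕ):ℤ))
    = (List.range m).map (fun a : ℕ => (a:ℤ)) := by
  induction m with
  | zero => rfl
  | succ k ih => rw [List.range_succ]; simp_all

lemma motz_take (hS : IsCCS (n + 1) S) (i : ℕ) (hi : i ≤ n) :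
    ((motz (n + 1) S).take i).sum = ccnt S i - 1 := by
  have key : ∀ m : ℕ, m ≤ n → ((List.range m).map (fun k : ℕ =>
      ((S ∩ ({-((k:ℤ) + 1), (k:ℤ) + 1} : Finset ℤ)).card : ℤ) - 1)).sum = ccnt S (m:ℤ) - 1 := by
    intro m
    induction m with
    | zero =>
      intro _
      simp [ccnt_zero hS]
    | succ k ih =>
      intro hk
      rw [List.range_succ, List.map_append, List.sum_append, ih (by omega)]
      simp only [List.map_cons, List.map_nil, List.sum_cons, List.sum_nil]
      have hp := pair_card S ((k:ℤ)+1) (by omega)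
      have hc := crel S ((k:ℤ)+1) (by omega)
      rw [show ((k:ℤ) + 1 - 1) = (k:ℤ) from by ring] at hc
      push_cast
      rw [hp, hc]
      ring
  have hmotz : motz (n + 1) S = (List.range n).map (fun k : ℕ =>
      ((S ∩ ({-((k:ℤ) + 1), (k:ℤ) + 1} : Finset ℤ)).card : ℤ) - 1) := by
    unfold motz
    rw [show n + 1 - 1 = n from rfl]
    rw [coe_range n, List.map_map]
    rfl
  rw [hmotz, ← List.map_take, List.take_range, min_eq_left hi]
  exact key i hi

end Stmt11Aux
end

/-- For every `l ≥ 2`, `n ≥ 1` and centred Catalan set `S` of size `n+1`, there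
is an `(n,l)`-AS-trapezoid `A` with `S(A) = S` whose `i`-th row has exactly
`1 + m_1(S) + ⋯ + m_i(S)` entries equal to `1`; in particular the number of
`(n,l)`-AS-trapezoids with associated centred Catalan set `S` is positive. -/
theorem stmt11 (n l : ℕ) (hn : 1 ≤ n) (hl : 2 ≤ l) (S : Finset ℤ)
    (hS : IsCCS (n + 1) S) :
    (∃ A : ℤ → ℤ → ℤ, IsASTrap n l A ∧ trapCat n l A = S ∧
      ∀ i : ℕ, 1 ≤ i → i ≤ n →
        ((((Finset.Icc (-(i : ℤ) + 1) ((l : ℤ) + i - 1)).filter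
            (fun j => A i j = 1)).card : ℤ))
          = 1 + ((motz (n + 1) S).take i).sum) ∧
    0 < wS n l S := by
  classical
  have htrap : IsASTrap n l (Stmt11Aux.Af S l n) := by
    refine ⟨Stmt11Aux.Af_support S l n hl, Stmt11Aux.Af_val S l n hl, ?_, ?_,
      Stmt11Aux.Af_rowalt hS l hl, Stmt11Aux.Af_colalt hS l hl, Stmt11Aux.Af_coltop hS l hl⟩
    · intro i h1 h2
      exact Stmt11Aux.Af_rowsum hS l hl i h1 h2
    · intro j h1 h2
      exact Stmt11Aux.colsum_central hS l hl j h1 h2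
  have hcat : trapCat n l (Stmt11Aux.Af S l n) = S := Stmt11Aux.Af_trapcat hS l hl
  constructor
  · refine ⟨Stmt11Aux.Af S l n, htrap, hcat, ?_⟩
    intro i h1 h2
    have hi1 : 1 ≤ (i:ℤ) := by exact_mod_cast h1
    have hi2 : (i:ℤ) ≤ (n:ℤ) := by exact_mod_cast h2
    rw [Stmt11Aux.ones_card hS l hl (i:ℤ) hi1 hi2, Stmt11Aux.motz_take hS i h2]
    ring
  · haveI hfin : Finite {A : ℤ → ℤ → ℤ // IsASTrap n l A ∧ trapCat n l A = S} := by
      apply Finite.of_injective (β := (((Finset.Icc (1:ℤ) (n:ℤ)) ×ˢ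
          (Finset.Icc (-(n:ℤ)+1) ((l:ℤ)+(n:ℤ)-1)) : Finset (ℤ × ℤ)) → Fin 3))
        (f := fun A p => if A.1 (p.1).1 (p.1).2 = 1 then 2
          else if A.1 (p.1).1 (p.1).2 = -1 then 0 else 1)
      intro A B hEq
      apply Subtype.ext
      funext i j
      by_cases hij : (1 ≤ i ∧ i ≤ (n:ℤ)) ∧ (-(n:ℤ)+1 ≤ j ∧ j ≤ (l:ℤ)+(n:ℤ)-1)
      · have hmem : (i, j) ∈ (Finset.Icc (1:ℤ) (n:ℤ)) ×ˢ
            (Finset.Icc (-(n:ℤ)+1) ((l:ℤ)+(n:ℤ)-1)) := by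
          rw [Finset.mem_product, Finset.mem_Icc, Finset.mem_Icc]
          exact ⟨⟨hij.1.1, hij.1.2⟩, hij.2⟩
        have h : (if A.1 i j = 1 then (2 : Fin 3) else if A.1 i j = -1 then 0 else 1)
            = (if B.1 i j = 1 then (2 : Fin 3) else if B.1 i j = -1 then 0 else 1) :=
          congrFun hEq ⟨(i, j), hmem⟩
        rcases A.2.1.2.1 i j with hA|hA|hA <;> rcases B.2.1.2.1 i j with hB|hB|hB <;>
          rw [hA, hB] at h ⊢ <;> first | rfl | (exact absurd h (by decide))
      · have hA0 : A.1 i j = 0 := by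
          by_contra hne
          have hs := A.2.1.1 i j hne
          omega
        have hB0 : B.1 i j = 0 := by
          by_contra hne
          have hs := B.2.1.1 i j hne
          omega
        rw [hA0, hB0]
    haveI hne : Nonempty {A : ℤ → ℤ → ℤ // IsASTrap n l A ∧ trapCat n l A = S} :=
      ⟨⟨Stmt11Aux.Af S l n, htrap, hcat⟩⟩
    unfold wS
    exact Nat.card_pos
end

section
/- Splitting lemma for AS-trapezoids: Let S1, S2 be centred Catalan sets. Placing an (|S2|-1, l+2|S1|-2)-AS-trapezoid A2 with S(A2)=S2 centred above an (|S1|-1, l)-AS-trapezoid A1 with S(A1)=S1 yields an (|S1∘S2|-1, l)-AS-trapezoid with associated centred Catalan set S1 ∘ S2; conversely, every (|S1∘S2|-1, l)-AS-trapezoid A with S(A) = S1 ∘ S2 arises uniquely in this way. -/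
open Finset

section Aux

lemma sum_Icc_shiftZ (f : ℤ → ℤ) (a b c : ℤ) :
    ∑ j ∈ Finset.Icc a b, f (j + c) = ∑ j ∈ Finset.Icc (a + c) (b + c), f j := by
  rw [← Finset.map_add_right_Icc a b c, Finset.sum_map]
  rfl

lemma sum_Icc_splitZ (f : ℤ → ℤ) (a b c : ℤ) (h1 : a ≤ b + 1) (h2 : b ≤ c) :
    ∑ i ∈ Finset.Icc a c, f i = ∑ i ∈ Finset.Icc a b, f i + ∑ i ∈ Finset.Icc (b + 1) c, f i := by
  rw [← Finset.sum_union]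
  · congr 1
    ext x
    simp only [Finset.mem_union, Finset.mem_Icc]
    omega
  · rw [Finset.disjoint_left]
    intro x hx hy
    simp only [Finset.mem_Icc] at hx hy
    omega

lemma dil_strictMono {c : ℤ} (hc : 0 ≤ c) : StrictMono (dil c) := by
  intro x y h
  unfold dil
  split_ifs <;> omega

lemma ccs_zero_mem {S : Finset ℤ} (h : IsCCS S.card S) : 0 ∈ S := by
  have h3 := h.2.2 0 (by omega)
  simp only [Nat.cast_zero, neg_zero, zero_add] at h3
  have : (S ∩ Finset.Icc (0 : ℤ) 0).Nonempty := by
    rw [← Finset.card_pos]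
    omega
  obtain ⟨x, hx⟩ := this
  simp only [Finset.mem_inter, Finset.mem_Icc] at hx
  have : x = 0 := by omega
  rw [← this]
  exact hx.1

lemma ccs_card_pos {S : Finset ℤ} (h : IsCCS S.card S) : 1 ≤ S.card :=
  Finset.card_pos.mpr ⟨0, ccs_zero_mem h⟩

end Aux


section Col

/-- Structure of a column of an AS-trapezoid: reading from row `a` upward,
either everything is zero (and the partial sum is 0), or there is a lowest
nonzero entry `b`, and the partial sum is 1 if `A b j = 1` and 0 if `A b j = -1`. -/
lemma colStruct (A : ℤ → ℤ → ℤ) (j N : ℤ)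
    (hv : ∀ i, A i j = -1 ∨ A i j = 0 ∨ A i j = 1)
    (hb : ∀ i, N < i → A i j = 0)
    (hca : ColAlt A) (htp : ColTopPos A) :
    ∀ a, ((∀ b, a ≤ b → A b j = 0) ∧ ∑ i ∈ Finset.Icc a N, A i j = 0) ∨
      (∃ b, a ≤ b ∧ A b j ≠ 0 ∧ (∀ c, a ≤ c → c < b → A c j = 0) ∧
        ((A b j = 1 ∧ ∑ i ∈ Finset.Icc a N, A i j = 1) ∨
         (A b j = -1 ∧ ∑ i ∈ Finset.Icc a N, A i j = 0))) := by
  have main : ∀ k : ℕ, ∀ a : ℤ, N + 1 - a ≤ (k : ℤ) →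
      (((∀ b, a ≤ b → A b j = 0) ∧ ∑ i ∈ Finset.Icc a N, A i j = 0) ∨
      (∃ b, a ≤ b ∧ A b j ≠ 0 ∧ (∀ c, a ≤ c → c < b → A c j = 0) ∧
        ((A b j = 1 ∧ ∑ i ∈ Finset.Icc a N, A i j = 1) ∨
         (A b j = -1 ∧ ∑ i ∈ Finset.Icc a N, A i j = 0)))) := by
    intro k
    induction k with
    | zero =>
      intro a ha
      left
      constructor
      · intro b hab; exact hb b (by omega)
      · rw [Finset.Icc_eq_empty (by omega)]; simp
    | succ k IH =>
      intro a ha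
      by_cases hk : N + 1 - a ≤ (k : ℤ)
      · exact IH a hk
      · have IHa := IH (a + 1) (by push_cast; omega)
        have hins : Finset.Icc a N = insert a (Finset.Icc (a + 1) N) := by
          ext x
          simp only [Finset.mem_Icc, Finset.mem_insert]
          omega
        have hnotmem : a ∉ Finset.Icc (a + 1) N := by simp
        have hsum : ∑ i ∈ Finset.Icc a N, A i j
            = A a j + ∑ i ∈ Finset.Icc (a + 1) N, A i j := by
          rw [hins, Finset.sum_insert hnotmem]
        by_cases h0 : A a j = 0
        · rcases IHa with ⟨hall, hs⟩ | ⟨b, hab, hbne, hmid, hcs⟩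
          · left
            constructor
            · intro b hab
              rcases eq_or_lt_of_le hab with rfl | hlt
              · exact h0
              · exact hall b (by omega)
            · rw [hsum, h0, hs]; ring
          · right
            refine ⟨b, by omega, hbne, ?_, ?_⟩
            · intro c hc1 hc2
              rcases eq_or_lt_of_le hc1 with rfl | hlt
              · exact h0
              · exact hmid c (by omega) hc2
            · rcases hcs with ⟨h1, h2⟩ | ⟨h1, h2⟩
              · left; exact ⟨h1, by rw [hsum, h0, h2]; ring⟩
              · right; exact ⟨h1, by rw [hsum, h0, h2]; ring⟩
        · right
          refine ⟨a, le_refl _, h0, by intro c h1 h2; omega, ?_⟩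
          rcases IHa with ⟨hall, hs⟩ | ⟨b, hab, hbne, hmid, hcs⟩
          · have : A a j = 1 := htp a j h0 (fun i' hi' => hall i' (by omega))
            left
            exact ⟨this, by rw [hsum, this, hs]; ring⟩
          · have halt : A a j = -A b j :=
              hca j a b (by omega) h0 hbne (fun i hi1 hi2 => hmid i (by omega) hi2)
            rcases hcs with ⟨h1, h2⟩ | ⟨h1, h2⟩
            · right
              constructor
              · rw [halt, h1]
              · rw [hsum, halt, h1, h2]; ring
            · left
              constructor
              · rw [halt, h1]; ring
              · rw [hsum, halt, h1, h2]; ring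
  intro a
  exact main (N + 1 - a).toNat a (by omega)

/-- Column partial sums are 0 or 1. -/
lemma colSum01 (A : ℤ → ℤ → ℤ) (j N : ℤ)
    (hv : ∀ i, A i j = -1 ∨ A i j = 0 ∨ A i j = 1)
    (hb : ∀ i, N < i → A i j = 0)
    (hca : ColAlt A) (htp : ColTopPos A) (a : ℤ) :
    ∑ i ∈ Finset.Icc a N, A i j = 0 ∨ ∑ i ∈ Finset.Icc a N, A i j = 1 := by
  rcases colStruct A j N hv hb hca htp a with ⟨_, hs⟩ | ⟨b, _, _, _, hcs⟩
  · left; exact hs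
  · rcases hcs with ⟨_, h2⟩ | ⟨_, h2⟩
    · right; exact h2
    · left; exact h2

/-- If the partial column sum from `a` up is 0 and `b ≥ a` is the lowest nonzero
entry at or above `a`, then `A b j = -1`. -/
lemma colBottomNeg (A : ℤ → ℤ → ℤ) (j N : ℤ)
    (hv : ∀ i, A i j = -1 ∨ A i j = 0 ∨ A i j = 1)
    (hb : ∀ i, N < i → A i j = 0)
    (hca : ColAlt A) (htp : ColTopPos A) (a b : ℤ)
    (hs : ∑ i ∈ Finset.Icc a N, A i j = 0)
    (hab : a ≤ b) (hbne : A b j ≠ 0) (hmid : ∀ c, a ≤ c → c < b → A c j = 0) :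
    A b j = -1 := by
  rcases colStruct A j N hv hb hca htp a with ⟨hall, _⟩ | ⟨b', hab', hbne', hmid', hcs⟩
  · exact absurd (hall b hab) hbne
  · have hbb : b = b' := by
      by_contra hne
      rcases lt_or_gt_of_ne hne with hlt | hgt
      · exact hbne (hmid' b hab hlt)
      · exact hbne' (hmid b' hab' hgt)
    subst hbb
    rcases hcs with ⟨h1, h2⟩ | ⟨h1, _⟩
    · omega
    · exact h1

end Col


section Trap

lemma trap_zero_of_high {n l : ℕ} {A : ℤ → ℤ → ℤ} (h : IsASTrap n l A) :
    ∀ i j : ℤ, (n : ℤ) < i → A i j = 0 := by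
  intro i j hi
  by_contra hne
  have := h.1 i j hne
  omega

lemma trap_colsum01 {n l : ℕ} {A : ℤ → ℤ → ℤ} (h : IsASTrap n l A) (a j : ℤ) :
    ∑ i ∈ Finset.Icc a (n : ℤ), A i j = 0 ∨ ∑ i ∈ Finset.Icc a (n : ℤ), A i j = 1 :=
  colSum01 A j n (fun i => h.2.1 i j) (fun i hi => trap_zero_of_high h i j hi)
    h.2.2.2.2.2.1 h.2.2.2.2.2.2 a

lemma trap_colsum_mem {n l : ℕ} {A : ℤ → ℤ → ℤ} (h : IsASTrap n l A) (a j : ℤ)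
    (hne : ∑ i ∈ Finset.Icc a (n : ℤ), A i j ≠ 0) :
    -(n : ℤ) + 1 ≤ j ∧ j ≤ (l : ℤ) + n - 1 := by
  obtain ⟨i, hi, hne'⟩ := Finset.exists_ne_zero_of_sum_ne_zero hne
  have := h.1 i j hne'
  omega

end Trap

section Stack

lemma stack_colsum (n1 n2 : ℕ) (A1 A2 : ℤ → ℤ → ℤ) (j : ℤ) :
    ∑ i ∈ Finset.Icc (1 : ℤ) ((n1 : ℤ) + (n2 : ℤ)), stack n1 A1 A2 i j
      = (∑ i ∈ Finset.Icc (1 : ℤ) (n1 : ℤ), A1 i j)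
        + ∑ i ∈ Finset.Icc (1 : ℤ) (n2 : ℤ), A2 i (j + n1) := by
  rw [sum_Icc_splitZ _ 1 (n1 : ℤ) ((n1 : ℤ) + (n2 : ℤ)) (by omega) (by omega)]
  congr 1
  · apply Finset.sum_congr rfl
    intro i hi
    rw [Finset.mem_Icc] at hi
    simp [stack, hi.2]
  · have hsh := sum_Icc_shiftZ (fun i => stack n1 A1 A2 i j) 1 (n2 : ℤ) (n1 : ℤ)
    rw [show ((n1 : ℤ) + 1) = 1 + n1 by ring, show ((n1 : ℤ) + (n2 : ℤ)) = n2 + n1 by ring,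
      ← hsh]
    apply Finset.sum_congr rfl
    intro i hi
    rw [Finset.mem_Icc] at hi
    have hcond : ¬(i + (n1 : ℤ) ≤ (n1 : ℤ)) := by omega
    simp only [stack, if_neg hcond]
    congr 1
    ring

lemma stack_rowsum (n1 n2 l : ℕ) (A1 A2 : ℤ → ℤ → ℤ)
    (h1 : IsASTrap n1 l A1) (h2 : IsASTrap n2 (l + 2 * n1) A2)
    (i : ℤ) (hi1 : 1 ≤ i) (hi2 : i ≤ (n1 : ℤ) + n2) :
    ∑ j ∈ Finset.Icc (-i + 1) ((l : ℤ) + i - 1), stack n1 A1 A2 i j = 1 := by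
  by_cases hc : i ≤ (n1 : ℤ)
  · rw [show ∑ j ∈ Finset.Icc (-i + 1) ((l : ℤ) + i - 1), stack n1 A1 A2 i j
        = ∑ j ∈ Finset.Icc (-i + 1) ((l : ℤ) + i - 1), A1 i j from
      Finset.sum_congr rfl (fun j _ => by simp [stack, hc])]
    exact h1.2.2.1 i hi1 hc
  · have hrow := h2.2.2.1 (i - n1) (by omega) (by push_cast; omega)
    have hsh := sum_Icc_shiftZ (fun j => A2 (i - n1) j) (-i + 1) ((l : ℤ) + i - 1) (n1 : ℤ)
    rw [show ∑ j ∈ Finset.Icc (-i + 1) ((l : ℤ) + i - 1), stack n1 A1 A2 i j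
        = ∑ j ∈ Finset.Icc (-i + 1) ((l : ℤ) + i - 1), A2 (i - n1) (j + n1) from
      Finset.sum_congr rfl (fun j _ => by simp [stack, hc]), hsh]
    rw [show (-i + 1 + (n1 : ℤ)) = -(i - n1) + 1 by ring,
      show ((l : ℤ) + i - 1 + n1) = ((l + 2 * n1 : ℕ) : ℤ) + (i - n1) - 1 by push_cast; ring]
    exact hrow

lemma stack_isASTrap (n1 n2 l : ℕ) (hl : 1 ≤ l) (A1 A2 : ℤ → ℤ → ℤ)
    (h1 : IsASTrap n1 l A1) (h2 : IsASTrap n2 (l + 2 * n1) A2) :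
    IsASTrap (n1 + n2) l (stack n1 A1 A2) := by
  refine ⟨?_, ?_, ?_, ?_, ?_, ?_, ?_⟩
  · -- shape
    intro i j hne
    unfold stack at hne
    push_cast
    by_cases hc : i ≤ (n1 : ℤ)
    · rw [if_pos hc] at hne
      have := h1.1 i j hne
      omega
    · rw [if_neg hc] at hne
      have := h2.1 (i - n1) (j + n1) hne
      push_cast at this
      omega
  · -- values
    intro i j
    unfold stack
    by_cases hc : i ≤ (n1 : ℤ)
    · rw [if_pos hc]; exact h1.2.1 i j
    · rw [if_neg hc]; exact h2.2.1 (i - n1) (j + n1)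
  · -- row sums
    intro i hi1 hi2
    push_cast at hi2
    exact stack_rowsum n1 n2 l A1 A2 h1 h2 i hi1 hi2
  · -- column sums
    intro j hj1 hj2
    push_cast
    rw [stack_colsum]
    rw [h1.2.2.2.1 j hj1 hj2, h2.2.2.2.1 (j + n1) (by omega) (by push_cast; omega)]
    ring
  · -- RowAlt
    intro i j1 j2 hlt hne1 hne2 hmid
    by_cases hc : i ≤ (n1 : ℤ)
    · simp only [stack, if_pos hc] at hne1 hne2 hmid ⊢
      exact h1.2.2.2.2.1 i j1 j2 hlt hne1 hne2 hmid
    · simp only [stack, if_neg hc] at hne1 hne2 hmid ⊢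
      exact h2.2.2.2.2.1 (i - n1) (j1 + n1) (j2 + n1) (by omega) hne1 hne2
        (fun j hj1 hj2 => by
          have := hmid (j - n1) (by omega) (by omega)
          rwa [show j - (n1 : ℤ) + n1 = j by ring] at this)
  · -- ColAlt
    intro j i1 i2 hlt hne1 hne2 hmid
    by_cases hc2 : i2 ≤ (n1 : ℤ)
    · -- both in A1
      simp only [stack, if_pos hc2, if_pos (le_trans (le_of_lt hlt) hc2)] at hne1 hne2
      simp only [stack, if_pos hc2, if_pos (le_trans (le_of_lt hlt) hc2)]
      exact h1.2.2.2.2.2.1 j i1 i2 hlt hne1 hne2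
        (fun i hi1 hi2 => by
          have := hmid i hi1 hi2
          simpa [stack, le_trans (le_of_lt hi2) hc2] using this)
    · by_cases hc1 : i1 ≤ (n1 : ℤ)
      · -- junction case
        simp only [stack, if_pos hc1] at hne1
        simp only [stack, if_neg hc2] at hne2
        simp only [stack, if_pos hc1, if_neg hc2]
        -- A1 i1 j is topmost nonzero in A1's column j
        have htop : A1 i1 j = 1 := by
          apply h1.2.2.2.2.2.2 i1 j hne1
          intro i' hi'
          by_cases hc' : i' ≤ (n1 : ℤ)
          · by_cases hlt' : i' < i2
            · have := hmid i' hi' hlt'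
              simpa [stack, hc'] using this
            · -- i' ≥ i2 > n1 contradiction with hc'
              omega
          · exact trap_zero_of_high h1 i' j (by omega)
        -- column j + n1 is central for A2
        have hsh := h1.1 i1 j hne1
        have hcen : ∑ i ∈ Finset.Icc (1 : ℤ) (n2 : ℤ), A2 i (j + n1) = 0 :=
          h2.2.2.2.1 (j + n1) (by omega) (by push_cast; omega)
        have hbot : A2 (i2 - n1) (j + n1) = -1 := by
          apply colBottomNeg A2 (j + n1) (n2 : ℤ) (fun i => h2.2.1 i (j + n1))
            (fun i hi => trap_zero_of_high h2 i (j + n1) hi)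
            h2.2.2.2.2.2.1 h2.2.2.2.2.2.2 1 (i2 - n1) hcen (by omega) hne2
          intro c hc1' hc2'
          have := hmid (c + n1) (by omega) (by omega)
          simp only [stack, if_neg (show ¬(c + (n1 : ℤ) ≤ n1) by omega)] at this
          rwa [show c + (n1 : ℤ) - n1 = c by ring] at this
        rw [htop, hbot]
        ring
      · -- both in A2
        simp only [stack, if_neg hc1, if_neg hc2] at hne1 hne2 ⊢
        exact h2.2.2.2.2.2.1 (j + n1) (i1 - n1) (i2 - n1) (by omega) hne1 hne2
          (fun i hi1 hi2 => by
            have := hmid (i + n1) (by omega) (by omega)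
            simp only [stack, if_neg (show ¬(i + (n1 : ℤ) ≤ n1) by omega)] at this
            rwa [show i + (n1 : ℤ) - n1 = i by ring] at this)
  · -- ColTopPos
    intro i j hne habove
    by_cases hc : i ≤ (n1 : ℤ)
    · simp only [stack, if_pos hc] at hne ⊢
      apply h1.2.2.2.2.2.2 i j hne
      intro i' hi'
      by_cases hc' : i' ≤ (n1 : ℤ)
      · have := habove i' hi'
        simpa [stack, hc'] using this
      · exact trap_zero_of_high h1 i' j (by omega)
    · simp only [stack, if_neg hc] at hne ⊢
      apply h2.2.2.2.2.2.2 (i - n1) (j + n1) hne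
      intro i' hi'
      have := habove (i' + n1) (by omega)
      simp only [stack, if_neg (show ¬(i' + (n1 : ℤ) ≤ n1) by omega)] at this
      rwa [show i' + (n1 : ℤ) - n1 = i' by ring] at this

end Stack


section StackCat

lemma stack_trapCat (n1 n2 l : ℕ) (hl : 1 ≤ l) (A1 A2 : ℤ → ℤ → ℤ)
    (h1 : IsASTrap n1 l A1) (h2 : IsASTrap n2 (l + 2 * n1) A2) :
    trapCat (n1 + n2) l (stack n1 A1 A2) =
      trapCat n1 l A1 ∪ (trapCat n2 (l + 2 * n1) A2).image (dil (n1 : ℤ)) := by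
  have hC1 : ∀ j : ℤ, (∑ i ∈ Finset.Icc (1 : ℤ) (n1 : ℤ), A1 i j) = 0 ∨
      (∑ i ∈ Finset.Icc (1 : ℤ) (n1 : ℤ), A1 i j) = 1 := fun j => trap_colsum01 h1 1 j
  have hC2 : ∀ j : ℤ, (∑ i ∈ Finset.Icc (1 : ℤ) (n2 : ℤ), A2 i j) = 0 ∨
      (∑ i ∈ Finset.Icc (1 : ℤ) (n2 : ℤ), A2 i j) = 1 := fun j => trap_colsum01 h2 1 j
  have hC2cen : ∀ j : ℤ, 1 ≤ j → j ≤ (l : ℤ) + 2 * n1 - 1 →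
      (∑ i ∈ Finset.Icc (1 : ℤ) (n2 : ℤ), A2 i j) = 0 := by
    intro j hj1 hj2
    exact h2.2.2.2.1 j hj1 (by push_cast; omega)
  ext s
  simp only [trapCat, Finset.mem_insert, Finset.mem_image, Finset.mem_filter,
    Finset.mem_Icc, Finset.mem_union, Nat.cast_add]
  simp only [stack_colsum n1 n2 A1 A2]
  constructor
  · rintro (rfl | ⟨j, ⟨⟨hjl, hjr⟩, hpos⟩, hms⟩)
    · left; left; rfl
    · by_cases hc1 : 0 < ∑ i ∈ Finset.Icc (1 : ℤ) (n1 : ℤ), A1 i j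
      · left; right
        have hmem := trap_colsum_mem h1 1 j (by omega)
        exact ⟨j, ⟨⟨hmem.1, hmem.2⟩, hc1⟩, hms⟩
      · have hc1z : (∑ i ∈ Finset.Icc (1 : ℤ) (n1 : ℤ), A1 i j) = 0 := by
          rcases hC1 j with h | h
          · exact h
          · omega
        have hc2 : 0 < ∑ i ∈ Finset.Icc (1 : ℤ) (n2 : ℤ), A2 i (j + n1) := by omega
        have hmem := trap_colsum_mem h2 1 (j + n1) (by omega)
        push_cast at hmem
        right
        have hnotcen : j + (n1 : ℤ) ≤ 0 ∨ (l : ℤ) + 2 * n1 ≤ j + n1 := by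
          by_contra hcon
          push_neg at hcon
          rw [hC2cen (j + n1) (by omega) (by omega)] at hc2
          omega
        rcases hnotcen with hlo | hhi
        · refine ⟨j + (n1 : ℤ) - 1, Or.inr ⟨j + n1, ⟨⟨by omega, by push_cast; omega⟩, hc2⟩,
            by rw [if_pos (by omega : j + (n1:ℤ) ≤ 0)]⟩, ?_⟩
          rw [← hms, if_pos (by omega : j ≤ (0:ℤ))]
          unfold dil
          rw [if_neg (by omega), if_neg (by omega)]
          ring
        · refine ⟨j + (n1 : ℤ) - (((l + 2 * n1 : ℕ) : ℤ) - 1),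
            Or.inr ⟨j + n1, ⟨⟨by omega, by push_cast; omega⟩, hc2⟩,
            by rw [if_neg (by push_cast; omega : ¬(j + (n1:ℤ) ≤ 0))]; push_cast; ring⟩, ?_⟩
          rw [← hms, if_neg (by omega : ¬(j ≤ (0:ℤ)))]
          unfold dil
          rw [if_pos (by push_cast; omega)]
          push_cast
          ring
  · have hC2nn : ∀ j : ℤ, 0 ≤ ∑ i ∈ Finset.Icc (1 : ℤ) (n2 : ℤ), A2 i j := by
      intro j; rcases hC2 j with h | h <;> omega
    have hC1nn : ∀ j : ℤ, 0 ≤ ∑ i ∈ Finset.Icc (1 : ℤ) (n1 : ℤ), A1 i j := by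
      intro j; rcases hC1 j with h | h <;> omega
    rintro ((rfl | ⟨j, ⟨⟨hjl, hjr⟩, hpos⟩, hms⟩) | ⟨x, (rfl | ⟨j', ⟨⟨hjl, hjr⟩, hpos⟩, hmx⟩), hdil⟩)
    · left; rfl
    · right
      refine ⟨j, ⟨⟨by omega, by omega⟩, by have := hC2nn (j + n1); omega⟩, hms⟩
    · left
      rw [← hdil]; rfl
    · push_cast at hjl hjr
      have hnotcen : j' ≤ 0 ∨ (l : ℤ) + 2 * n1 ≤ j' := by
        by_contra hcon
        push_neg at hcon
        rw [hC2cen j' (by omega) (by omega)] at hpos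
        omega
      right
      refine ⟨j' - n1, ⟨⟨by omega, by omega⟩, ?_⟩, ?_⟩
      · rw [show j' - (n1 : ℤ) + n1 = j' by ring]
        have := hC1nn (j' - n1)
        omega
      · rcases hnotcen with hlo | hhi
        · rw [if_pos (by omega : j' - (n1:ℤ) ≤ 0), ← hdil, ← hmx,
            if_pos (by omega : j' ≤ (0:ℤ))]
          unfold dil
          rw [if_neg (by omega), if_neg (by omega)]
          ring
        · rw [if_neg (by omega : ¬(j' - (n1:ℤ) ≤ 0)), ← hdil, ← hmx,
            if_neg (by omega : ¬(j' ≤ (0:ℤ)))]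
          unfold dil
          rw [if_pos (by push_cast; omega)]
          push_cast
          ring

end StackCat


section Decode

lemma trapCat_mem_low {n l : ℕ} {A : ℤ → ℤ → ℤ} (hA : IsASTrap n l A) (j : ℤ) (hj : j ≤ 0)
    (hpos : 0 < ∑ i ∈ Finset.Icc (1 : ℤ) (n : ℤ), A i j) : j - 1 ∈ trapCat n l A := by
  have hmem := trap_colsum_mem hA 1 j (by omega)
  simp only [trapCat, Finset.mem_insert, Finset.mem_image, Finset.mem_filter, Finset.mem_Icc]
  right
  exact ⟨j, ⟨⟨hmem.1, hmem.2⟩, hpos⟩, by rw [if_pos hj]⟩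

lemma trapCat_mem_high {n l : ℕ} {A : ℤ → ℤ → ℤ} (hA : IsASTrap n l A) (j : ℤ)
    (hj : (l : ℤ) ≤ j) (hl : 1 ≤ l)
    (hpos : 0 < ∑ i ∈ Finset.Icc (1 : ℤ) (n : ℤ), A i j) : j - l + 1 ∈ trapCat n l A := by
  have hmem := trap_colsum_mem hA 1 j (by omega)
  simp only [trapCat, Finset.mem_insert, Finset.mem_image, Finset.mem_filter, Finset.mem_Icc]
  right
  refine ⟨j, ⟨⟨hmem.1, hmem.2⟩, hpos⟩, ?_⟩
  rw [if_neg (by omega)]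
  ring

lemma mem_neg_colsum {n l : ℕ} {A : ℤ → ℤ → ℤ} (hA : IsASTrap n l A) {s : ℤ}
    (hs : s ∈ trapCat n l A) (hneg : s < 0) :
    -(n : ℤ) ≤ s ∧ ∑ i ∈ Finset.Icc (1 : ℤ) (n : ℤ), A i (s + 1) = 1 := by
  simp only [trapCat, Finset.mem_insert, Finset.mem_image, Finset.mem_filter,
    Finset.mem_Icc] at hs
  rcases hs with rfl | ⟨j0, ⟨⟨hr1, hr2⟩, hpos⟩, hm⟩
  · omega
  by_cases hj0 : j0 ≤ 0
  · rw [if_pos hj0] at hm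
    have h01 := trap_colsum01 hA 1 j0
    rw [show s + 1 = j0 by omega]
    constructor
    · omega
    · rcases h01 with h | h
      · omega
      · exact h
  · rw [if_neg hj0] at hm
    have hcen := hA.2.2.2.1 j0 (by omega) (by omega)
    omega

lemma mem_pos_colsum {n l : ℕ} {A : ℤ → ℤ → ℤ} (hA : IsASTrap n l A) {s : ℤ}
    (hs : s ∈ trapCat n l A) (hsp : 0 < s) :
    s ≤ (n : ℤ) ∧ ∑ i ∈ Finset.Icc (1 : ℤ) (n : ℤ), A i (s + l - 1) = 1 := by
  simp only [trapCat, Finset.mem_insert, Finset.mem_image, Finset.mem_filter,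
    Finset.mem_Icc] at hs
  rcases hs with rfl | ⟨j0, ⟨⟨hr1, hr2⟩, hpos⟩, hm⟩
  · omega
  by_cases hj0 : j0 ≤ 0
  · rw [if_pos hj0] at hm
    omega
  · rw [if_neg hj0] at hm
    by_cases hcen : j0 ≤ (l : ℤ) - 1
    · have := hA.2.2.2.1 j0 (by omega) (by omega)
      omega
    · have h01 := trap_colsum01 hA 1 j0
      rw [show s + (l : ℤ) - 1 = j0 by omega]
      constructor
      · omega
      · rcases h01 with h | h
        · omega
        · exact h

end Decode

section Band

lemma bandZero (n1 n2 l : ℕ) (hl : 1 ≤ l) (A : ℤ → ℤ → ℤ) (S1 S2 : Finset ℤ)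
    (h1 : IsCCS S1.card S1) (h2 : IsCCS S2.card S2)
    (hn1 : S1.card = n1 + 1) (hn2 : S2.card = n2 + 1)
    (hA : IsASTrap (n1 + n2) l A)
    (hS : trapCat (n1 + n2) l A = ccsConcat S1 S2) :
    ∀ j : ℤ, -(n1 : ℤ) + 1 ≤ j → j ≤ (l : ℤ) + n1 - 1 →
      ∑ i ∈ Finset.Icc ((n1 : ℤ) + 1) ((n1 : ℤ) + n2), A i j = 0 := by
  have hcast : ((n1 + n2 : ℕ) : ℤ) = (n1 : ℤ) + n2 := by push_cast; ring
  have hSS : trapCat (n1 + n2) l A = S1 ∪ S2.image (dil (n1 : ℤ)) := by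
    rw [hS]
    unfold ccsConcat
    rw [show ((S1.card : ℤ) - 1) = (n1 : ℤ) by omega]
  -- U j values
  have hU01 : ∀ j : ℤ, (∑ i ∈ Finset.Icc ((n1 : ℤ) + 1) ((n1 : ℤ) + n2), A i j) = 0 ∨
      (∑ i ∈ Finset.Icc ((n1 : ℤ) + 1) ((n1 : ℤ) + n2), A i j) = 1 := by
    intro j
    have := trap_colsum01 hA ((n1 : ℤ) + 1) j
    rwa [hcast] at this
  -- extreme columns: U = C
  have hUC : ∀ j : ℤ, (j ≤ -(n1 : ℤ) ∨ (l : ℤ) + n1 ≤ j) →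
      (∑ i ∈ Finset.Icc ((n1 : ℤ) + 1) ((n1 : ℤ) + n2), A i j)
        = ∑ i ∈ Finset.Icc (1 : ℤ) (((n1 + n2 : ℕ)) : ℤ), A i j := by
    intro j hj
    rw [hcast]
    apply Finset.sum_subset
    · intro x hx
      rw [Finset.mem_Icc] at hx ⊢
      omega
    · intro x hx hnx
      rw [Finset.mem_Icc] at hx hnx
      by_contra hne
      have := hA.1 x j hne
      rw [hcast] at this
      omega
  -- total sum of U over all columns is n2
  have htot : ∑ j ∈ Finset.Icc (-((n1 : ℤ) + n2) + 1) ((l : ℤ) + n1 + n2 - 1),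
      ∑ i ∈ Finset.Icc ((n1 : ℤ) + 1) ((n1 : ℤ) + n2), A i j = (n2 : ℤ) := by
    rw [Finset.sum_comm]
    have hrow : ∀ i ∈ Finset.Icc ((n1 : ℤ) + 1) ((n1 : ℤ) + n2),
        ∑ j ∈ Finset.Icc (-((n1 : ℤ) + n2) + 1) ((l : ℤ) + n1 + n2 - 1), A i j = 1 := by
      intro i hi
      rw [Finset.mem_Icc] at hi
      have hsub : ∑ j ∈ Finset.Icc (-i + 1) ((l : ℤ) + i - 1), A i j
          = ∑ j ∈ Finset.Icc (-((n1 : ℤ) + n2) + 1) ((l : ℤ) + n1 + n2 - 1), A i j := by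
        apply Finset.sum_subset
        · intro x hx
          rw [Finset.mem_Icc] at hx ⊢
          omega
        · intro x hx hnx
          rw [Finset.mem_Icc] at hx hnx
          by_contra hne
          have := hA.1 i x hne
          push_cast at this
          omega
      rw [← hsub]
      exact hA.2.2.1 i (by omega) (by omega)
    rw [Finset.sum_congr rfl hrow, Finset.sum_const, Int.card_Icc]
    simp only [nsmul_eq_mul, mul_one]
    omega
  -- identify low extreme columns with negative elements of S2
  have hlowset : (Finset.Icc (-((n1 : ℤ) + n2) + 1) (-(n1 : ℤ))).filter
        (fun j => ∑ i ∈ Finset.Icc ((n1 : ℤ) + 1) ((n1 : ℤ) + n2), A i j = 1)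
      = (S2.filter (fun x => x < 0)).image (fun x : ℤ => x + 1 - (n1 : ℤ)) := by
    ext j
    simp only [Finset.mem_filter, Finset.mem_Icc, Finset.mem_image]
    constructor
    · rintro ⟨⟨hj1, hj2⟩, hU⟩
      have hCj : 0 < ∑ i ∈ Finset.Icc (1 : ℤ) (((n1 + n2 : ℕ)) : ℤ), A i j := by
        rw [← hUC j (Or.inl hj2)]
        omega
      have hmem := trapCat_mem_low hA j (by omega) hCj
      rw [hSS, Finset.mem_union] at hmem
      rcases hmem with hmem | hmem
      · have := h1.2.1 _ hmem
        omega
      · rw [Finset.mem_image] at hmem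
        obtain ⟨x, hx, hdil⟩ := hmem
        unfold dil at hdil
        split_ifs at hdil with hx1 hx2
        · omega
        · omega
        · exact ⟨x, ⟨hx, by omega⟩, by omega⟩
    · rintro ⟨x, ⟨hx, hxneg⟩, rfl⟩
      have hxb := h2.2.1 x hx
      have hsmem : x - (n1 : ℤ) ∈ trapCat (n1 + n2) l A := by
        rw [hSS, Finset.mem_union]
        right
        rw [Finset.mem_image]
        exact ⟨x, hx, by unfold dil; rw [if_neg (by omega), if_neg (by omega)]⟩
      have := (mem_neg_colsum hA hsmem (by omega)).2
      rw [show x - (n1 : ℤ) + 1 = x + 1 - n1 by ring] at this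
      have hCU := hUC (x + 1 - n1) (Or.inl (by omega))
      rw [hcast] at hCU this
      constructor
      · constructor <;> omega
      · omega
  -- identify high extreme columns with positive elements of S2
  have hhighset : (Finset.Icc ((l : ℤ) + n1) ((l : ℤ) + n1 + n2 - 1)).filter
        (fun j => ∑ i ∈ Finset.Icc ((n1 : ℤ) + 1) ((n1 : ℤ) + n2), A i j = 1)
      = (S2.filter (fun x => 0 < x)).image (fun x : ℤ => x + (n1 : ℤ) + l - 1) := by
    ext j
    simp only [Finset.mem_filter, Finset.mem_Icc, Finset.mem_image]
    constructor
    · rintro ⟨⟨hj1, hj2⟩, hU⟩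
      have hCj : 0 < ∑ i ∈ Finset.Icc (1 : ℤ) (((n1 + n2 : ℕ)) : ℤ), A i j := by
        rw [← hUC j (Or.inr hj1)]
        omega
      have hmem := trapCat_mem_high hA j (by omega) hl hCj
      rw [hSS, Finset.mem_union] at hmem
      rcases hmem with hmem | hmem
      · have := h1.2.1 _ hmem
        omega
      · rw [Finset.mem_image] at hmem
        obtain ⟨x, hx, hdil⟩ := hmem
        unfold dil at hdil
        split_ifs at hdil with hx1 hx2
        · exact ⟨x, ⟨hx, hx1⟩, by omega⟩
        · omega
        · omega
    · rintro ⟨x, ⟨hx, hxpos⟩, rfl⟩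
      have hxb := h2.2.1 x hx
      have hsmem : x + (n1 : ℤ) ∈ trapCat (n1 + n2) l A := by
        rw [hSS, Finset.mem_union]
        right
        rw [Finset.mem_image]
        exact ⟨x, hx, by unfold dil; rw [if_pos (by omega)]⟩
      have := (mem_pos_colsum hA hsmem (by omega)).2
      rw [show x + (n1 : ℤ) + l - 1 = x + n1 + l - 1 by ring] at this
      have hCU := hUC (x + n1 + l - 1) (Or.inr (by omega))
      rw [hcast] at hCU this
      constructor
      · constructor <;> omega
      · omega
  -- counting
  have hzero2 : (0 : ℤ) ∈ S2 := ccs_zero_mem h2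
  have hcount : (S2.filter (fun x => x < 0)).card + (S2.filter (fun x => 0 < x)).card = n2 := by
    have hsplit := Finset.card_filter_add_card_filter_not
      (s := S2) (p := fun x => x < 0)
    have hins : S2.filter (fun x => ¬ x < 0) = insert 0 (S2.filter (fun x => 0 < x)) := by
      ext x
      simp only [Finset.mem_filter, Finset.mem_insert]
      constructor
      · rintro ⟨hx, hnx⟩
        rcases eq_or_lt_of_le (not_lt.mp hnx) with h | h
        · left; omega
        · right; exact ⟨hx, h⟩
      · rintro (rfl | ⟨hx, hpx⟩)
        · exact ⟨hzero2, by omega⟩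
        · exact ⟨hx, by omega⟩
    rw [hins, Finset.card_insert_of_notMem (by simp)] at hsplit
    omega
  -- sum over filter = card of filter (entries in {0,1})
  have hsumfilter : ∀ (T : Finset ℤ),
      ∑ j ∈ T, (∑ i ∈ Finset.Icc ((n1 : ℤ) + 1) ((n1 : ℤ) + n2), A i j)
        = ((T.filter (fun j => ∑ i ∈ Finset.Icc ((n1 : ℤ) + 1) ((n1 : ℤ) + n2), A i j = 1)).card : ℤ) := by
    intro T
    rw [← Finset.sum_filter_add_sum_filter_not T
      (fun j => ∑ i ∈ Finset.Icc ((n1 : ℤ) + 1) ((n1 : ℤ) + n2), A i j = 1)]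
    rw [Finset.sum_congr rfl (fun j hj => (Finset.mem_filter.mp hj).2),
      Finset.sum_const, Finset.sum_eq_zero (fun j hj => by
        have := hU01 j
        have h2' := (Finset.mem_filter.mp hj).2
        omega)]
    simp
  -- split total sum into low, band, high
  have hsplit1 : ∑ j ∈ Finset.Icc (-((n1 : ℤ) + n2) + 1) ((l : ℤ) + n1 + n2 - 1),
      (∑ i ∈ Finset.Icc ((n1 : ℤ) + 1) ((n1 : ℤ) + n2), A i j)
      = (∑ j ∈ Finset.Icc (-((n1 : ℤ) + n2) + 1) (-(n1 : ℤ)),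
          ∑ i ∈ Finset.Icc ((n1 : ℤ) + 1) ((n1 : ℤ) + n2), A i j)
        + ∑ j ∈ Finset.Icc (-(n1 : ℤ) + 1) ((l : ℤ) + n1 + n2 - 1),
          ∑ i ∈ Finset.Icc ((n1 : ℤ) + 1) ((n1 : ℤ) + n2), A i j := by
    have := sum_Icc_splitZ
      (fun j => ∑ i ∈ Finset.Icc ((n1 : ℤ) + 1) ((n1 : ℤ) + n2), A i j)
      (-((n1 : ℤ) + n2) + 1) (-(n1 : ℤ)) ((l : ℤ) + n1 + n2 - 1) (by omega) (by omega)
    simpa using this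
  have hsplit2 : ∑ j ∈ Finset.Icc (-(n1 : ℤ) + 1) ((l : ℤ) + n1 + n2 - 1),
      (∑ i ∈ Finset.Icc ((n1 : ℤ) + 1) ((n1 : ℤ) + n2), A i j)
      = (∑ j ∈ Finset.Icc (-(n1 : ℤ) + 1) ((l : ℤ) + n1 - 1),
          ∑ i ∈ Finset.Icc ((n1 : ℤ) + 1) ((n1 : ℤ) + n2), A i j)
        + ∑ j ∈ Finset.Icc ((l : ℤ) + n1) ((l : ℤ) + n1 + n2 - 1),
          ∑ i ∈ Finset.Icc ((n1 : ℤ) + 1) ((n1 : ℤ) + n2), A i j := by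
    have := sum_Icc_splitZ
      (fun j => ∑ i ∈ Finset.Icc ((n1 : ℤ) + 1) ((n1 : ℤ) + n2), A i j)
      (-(n1 : ℤ) + 1) ((l : ℤ) + n1 - 1) ((l : ℤ) + n1 + n2 - 1) (by omega) (by omega)
    rw [show ((l : ℤ) + n1 - 1 + 1) = (l : ℤ) + n1 by ring] at this
    simpa using this
  have hlowcard : ∑ j ∈ Finset.Icc (-((n1 : ℤ) + n2) + 1) (-(n1 : ℤ)),
      (∑ i ∈ Finset.Icc ((n1 : ℤ) + 1) ((n1 : ℤ) + n2), A i j)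
        = ((S2.filter (fun x => x < 0)).card : ℤ) := by
    rw [hsumfilter, hlowset, Finset.card_image_of_injective _ (fun a b h => by omega)]
  have hhighcard : ∑ j ∈ Finset.Icc ((l : ℤ) + n1) ((l : ℤ) + n1 + n2 - 1),
      (∑ i ∈ Finset.Icc ((n1 : ℤ) + 1) ((n1 : ℤ) + n2), A i j)
        = ((S2.filter (fun x => 0 < x)).card : ℤ) := by
    rw [hsumfilter, hhighset, Finset.card_image_of_injective _ (fun a b h => by omega)]
  have hbandsum : ∑ j ∈ Finset.Icc (-(n1 : ℤ) + 1) ((l : ℤ) + n1 - 1),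
      (∑ i ∈ Finset.Icc ((n1 : ℤ) + 1) ((n1 : ℤ) + n2), A i j) = 0 := by
    omega
  intro j hj1 hj2
  have hnonneg : ∀ j' ∈ Finset.Icc (-(n1 : ℤ) + 1) ((l : ℤ) + n1 - 1),
      0 ≤ ∑ i ∈ Finset.Icc ((n1 : ℤ) + 1) ((n1 : ℤ) + n2), A i j' := by
    intro j' _
    rcases hU01 j' with h | h <;> omega
  have := (Finset.sum_eq_zero_iff_of_nonneg hnonneg).mp hbandsum j
    (Finset.mem_Icc.mpr ⟨hj1, hj2⟩)
  exact this

end Band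


section SplitTrap

lemma split_trap1 (n1 n2 l : ℕ) (hl : 1 ≤ l) (A : ℤ → ℤ → ℤ)
    (hA : IsASTrap (n1 + n2) l A)
    (hband : ∀ j : ℤ, -(n1 : ℤ) + 1 ≤ j → j ≤ (l : ℤ) + n1 - 1 →
      ∑ i ∈ Finset.Icc ((n1 : ℤ) + 1) ((n1 : ℤ) + n2), A i j = 0) :
    IsASTrap n1 l (fun i j => if i ≤ (n1 : ℤ) then A i j else 0) := by
  have hcast : ((n1 + n2 : ℕ) : ℤ) = (n1 : ℤ) + n2 := by push_cast; ring
  refine ⟨?_, ?_, ?_, ?_, ?_, ?_, ?_⟩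
  · intro i j hne
    by_cases hc : i ≤ (n1 : ℤ)
    · simp only [if_pos hc] at hne
      have := hA.1 i j hne
      exact ⟨this.1, hc, this.2.2⟩
    · simp only [if_neg hc] at hne
      exact absurd rfl hne
  · intro i j
    by_cases hc : i ≤ (n1 : ℤ)
    · simp only [if_pos hc]; exact hA.2.1 i j
    · simp only [if_neg hc]; right; left; trivial
  · intro i hi1 hi2
    rw [Finset.sum_congr rfl (fun j _ => if_pos hi2)]
    exact hA.2.2.1 i hi1 (by omega)
  · intro j hj1 hj2
    have hcong : ∑ i ∈ Finset.Icc (1 : ℤ) (n1 : ℤ),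
        (if i ≤ (n1 : ℤ) then A i j else 0) = ∑ i ∈ Finset.Icc (1 : ℤ) (n1 : ℤ), A i j :=
      Finset.sum_congr rfl (fun i hi => if_pos (Finset.mem_Icc.mp hi).2)
    have hfull := hA.2.2.2.1 j hj1 hj2
    rw [hcast] at hfull
    have hU := hband j (by omega) (by omega)
    have hsplit : ∑ i ∈ Finset.Icc (1 : ℤ) ((n1 : ℤ) + n2), A i j
        = ∑ i ∈ Finset.Icc (1 : ℤ) (n1 : ℤ), A i j
          + ∑ i ∈ Finset.Icc ((n1 : ℤ) + 1) ((n1 : ℤ) + n2), A i j := by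
      simpa using sum_Icc_splitZ (fun i => A i j) 1 (n1 : ℤ) ((n1 : ℤ) + n2)
        (by omega) (by omega)
    rw [hcong]
    omega
  · intro i j1 j2 hlt hne1 hne2 hmid
    by_cases hc : i ≤ (n1 : ℤ)
    · simp only [if_pos hc] at hne1 hne2 hmid ⊢
      exact hA.2.2.2.2.1 i j1 j2 hlt hne1 hne2 hmid
    · simp only [if_neg hc] at hne1
      exact absurd rfl hne1
  · intro j i1 i2 hlt hne1 hne2 hmid
    by_cases hc2 : i2 ≤ (n1 : ℤ)
    · have hc1 : i1 ≤ (n1 : ℤ) := by omega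
      simp only [if_pos hc1, if_pos hc2] at hne1 hne2 ⊢
      exact hA.2.2.2.2.2.1 j i1 i2 hlt hne1 hne2
        (fun i hi1 hi2 => by
          have := hmid i hi1 hi2
          simpa only [if_pos (show i ≤ (n1 : ℤ) by omega)] using this)
    · simp only [if_neg hc2] at hne2
      exact absurd rfl hne2
  · intro i j hne habove
    by_cases hc : i ≤ (n1 : ℤ)
    swap
    · simp only [if_neg hc] at hne
      exact absurd rfl hne
    simp only [if_pos hc] at hne ⊢
    have hsh := hA.1 i j hne
    have hU : ∑ i ∈ Finset.Icc ((n1 : ℤ) + 1) ((n1 : ℤ) + n2), A i j = 0 :=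
      hband j (by omega) (by omega)
    rcases colStruct A j ((n1 : ℤ) + n2) (fun i => hA.2.1 i j)
        (fun i hi => trap_zero_of_high hA i j (by omega)) hA.2.2.2.2.2.1 hA.2.2.2.2.2.2
        ((n1 : ℤ) + 1) with ⟨hall, _⟩ | ⟨b, hb1, hbne, hmidb, hcs⟩
    · apply hA.2.2.2.2.2.2 i j hne
      intro i' hi'
      by_cases hc' : i' ≤ (n1 : ℤ)
      · have := habove i' hi'
        simpa only [if_pos hc'] using this
      · exact hall i' (by omega)
    · have hbneg : A b j = -1 := by
        rcases hcs with ⟨h1', h2'⟩ | ⟨h1', h2'⟩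
        · omega
        · exact h1'
      have halt : A i j = -A b j := by
        apply hA.2.2.2.2.2.1 j i b (by omega) hne hbne
        intro c hc1' hc2'
        by_cases hcc : c ≤ (n1 : ℤ)
        · have := habove c hc1'
          simpa only [if_pos hcc] using this
        · exact hmidb c (by omega) hc2'
      rw [halt, hbneg]
      ring

lemma split_trap2 (n1 n2 l : ℕ) (hl : 1 ≤ l) (A : ℤ → ℤ → ℤ)
    (hA : IsASTrap (n1 + n2) l A)
    (hband : ∀ j : ℤ, -(n1 : ℤ) + 1 ≤ j → j ≤ (l : ℤ) + n1 - 1 →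
      ∑ i ∈ Finset.Icc ((n1 : ℤ) + 1) ((n1 : ℤ) + n2), A i j = 0) :
    IsASTrap n2 (l + 2 * n1) (fun i j => if 1 ≤ i then A (i + n1) (j - n1) else 0) := by
  have hcast : ((n1 + n2 : ℕ) : ℤ) = (n1 : ℤ) + n2 := by push_cast; ring
  refine ⟨?_, ?_, ?_, ?_, ?_, ?_, ?_⟩
  · intro i j hne
    by_cases hc : 1 ≤ i
    · simp only [if_pos hc] at hne
      have := hA.1 (i + n1) (j - n1) hne
      rw [hcast] at this
      push_cast
      omega
    · simp only [if_neg hc] at hne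
      exact absurd rfl hne
  · intro i j
    by_cases hc : 1 ≤ i
    · simp only [if_pos hc]; exact hA.2.1 (i + n1) (j - n1)
    · simp only [if_neg hc]; right; left; trivial
  · intro i hi1 hi2
    rw [Finset.sum_congr rfl (fun j _ => if_pos hi1)]
    have h' := sum_Icc_shiftZ (fun j => A (i + n1) j) (-i + 1)
      (((l + 2 * n1 : ℕ) : ℤ) + i - 1) (-(n1 : ℤ))
    simp only [← sub_eq_add_neg] at h'
    rw [h', show (-i + 1 - (n1 : ℤ)) = -(i + n1) + 1 by ring,
      show (((l + 2 * n1 : ℕ) : ℤ) + i - 1 - n1) = (l : ℤ) + (i + n1) - 1 by push_cast; ring]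
    exact hA.2.2.1 (i + n1) (by omega) (by omega)
  · intro j hj1 hj2
    rw [Finset.sum_congr rfl (fun i hi => if_pos (Finset.mem_Icc.mp hi).1)]
    have h' := sum_Icc_shiftZ (fun i => A i (j - n1)) 1 (n2 : ℤ) (n1 : ℤ)
    rw [h', show ((1 : ℤ) + n1) = (n1 : ℤ) + 1 by ring,
      show ((n2 : ℤ) + n1) = (n1 : ℤ) + n2 by ring]
    push_cast at hj2
    exact hband (j - n1) (by omega) (by omega)
  · intro i j1 j2 hlt hne1 hne2 hmid
    by_cases hc : 1 ≤ i
    · simp only [if_pos hc] at hne1 hne2 hmid ⊢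
      exact hA.2.2.2.2.1 (i + n1) (j1 - n1) (j2 - n1) (by omega) hne1 hne2
        (fun j hja hjb => by
          have := hmid (j + n1) (by omega) (by omega)
          rwa [show j + (n1 : ℤ) - n1 = j by ring] at this)
    · simp only [if_neg hc] at hne1
      exact absurd rfl hne1
  · intro j i1 i2 hlt hne1 hne2 hmid
    by_cases hc1 : 1 ≤ i1
    · have hc2 : 1 ≤ i2 := by omega
      simp only [if_pos hc1, if_pos hc2] at hne1 hne2 ⊢
      exact hA.2.2.2.2.2.1 (j - n1) (i1 + n1) (i2 + n1) (by omega) hne1 hne2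
        (fun r hr1 hr2 => by
          have := hmid (r - n1) (by omega) (by omega)
          simpa only [if_pos (show 1 ≤ r - (n1 : ℤ) by omega),
            show r - (n1 : ℤ) + n1 = r by ring] using this)
    · simp only [if_neg hc1] at hne1
      exact absurd rfl hne1
  · intro i j hne habove
    by_cases hc : 1 ≤ i
    swap
    · simp only [if_neg hc] at hne
      exact absurd rfl hne
    simp only [if_pos hc] at hne ⊢
    apply hA.2.2.2.2.2.2 (i + n1) (j - n1) hne
    intro r hr
    have := habove (r - n1) (by omega)
    simpa only [if_pos (show 1 ≤ r - (n1 : ℤ) by omega),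
      show r - (n1 : ℤ) + n1 = r by ring] using this

end SplitTrap


section SplitCat

lemma splitCat1 (n1 n2 l : ℕ) (hl : 1 ≤ l) (A : ℤ → ℤ → ℤ) (S1 S2 : Finset ℤ)
    (h1 : IsCCS S1.card S1) (h2 : IsCCS S2.card S2)
    (hn1 : S1.card = n1 + 1) (hn2 : S2.card = n2 + 1)
    (hA : IsASTrap (n1 + n2) l A)
    (hS : trapCat (n1 + n2) l A = ccsConcat S1 S2)
    (hband : ∀ j : ℤ, -(n1 : ℤ) + 1 ≤ j → j ≤ (l : ℤ) + n1 - 1 →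
      ∑ i ∈ Finset.Icc ((n1 : ℤ) + 1) ((n1 : ℤ) + n2), A i j = 0) :
    trapCat n1 l (fun i j => if i ≤ (n1 : ℤ) then A i j else 0) = S1 := by
  have hcast : ((n1 + n2 : ℕ) : ℤ) = (n1 : ℤ) + n2 := by push_cast; ring
  have hSS : trapCat (n1 + n2) l A = S1 ∪ S2.image (dil (n1 : ℤ)) := by
    rw [hS]; unfold ccsConcat
    rw [show ((S1.card : ℤ) - 1) = (n1 : ℤ) by omega]
  have hcs : ∀ j : ℤ, -(n1 : ℤ) + 1 ≤ j → j ≤ (l : ℤ) + n1 - 1 →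
      ∑ i ∈ Finset.Icc (1 : ℤ) (n1 : ℤ), (if i ≤ (n1 : ℤ) then A i j else 0)
        = ∑ i ∈ Finset.Icc (1 : ℤ) ((n1 : ℤ) + (n2 : ℤ)), A i j := by
    intro j hj1 hj2
    rw [Finset.sum_congr rfl (fun i hi => if_pos (Finset.mem_Icc.mp hi).2)]
    have hsplit : ∑ i ∈ Finset.Icc (1 : ℤ) ((n1 : ℤ) + n2), A i j
        = ∑ i ∈ Finset.Icc (1 : ℤ) (n1 : ℤ), A i j
          + ∑ i ∈ Finset.Icc ((n1 : ℤ) + 1) ((n1 : ℤ) + n2), A i j := by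
      simpa using sum_Icc_splitZ (fun i => A i j) 1 (n1 : ℤ) ((n1 : ℤ) + n2)
        (by omega) (by omega)
    have hU := hband j hj1 hj2
    omega
  ext s
  simp only [trapCat, Finset.mem_insert, Finset.mem_image, Finset.mem_filter, Finset.mem_Icc]
  constructor
  · rintro (rfl | ⟨j, ⟨⟨hja, hjb⟩, hpos⟩, hm⟩)
    · exact ccs_zero_mem h1
    · rw [hcs j hja hjb] at hpos
      rw [← hcast] at hpos
      by_cases hj0 : j ≤ 0
      · have hmem := trapCat_mem_low hA j hj0 hpos
        rw [hSS, Finset.mem_union] at hmem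
        rw [if_pos hj0] at hm
        rcases hmem with hmem | hmem
        · rwa [← hm]
        · exfalso
          obtain ⟨x, hx, hdil⟩ := Finset.mem_image.mp hmem
          unfold dil at hdil
          split_ifs at hdil <;> omega
      · by_cases hcen : j ≤ (l : ℤ) - 1
        · exfalso
          have := hA.2.2.2.1 j (by omega) hcen
          omega
        · have hmem := trapCat_mem_high hA j (by omega) hl hpos
          rw [hSS, Finset.mem_union] at hmem
          rw [if_neg hj0] at hm
          rw [show j - (l : ℤ) + 1 = j - ((l : ℤ) - 1) by ring, hm] at hmem
          rcases hmem with hmem | hmem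
          · exact hmem
          · exfalso
            obtain ⟨x, hx, hdil⟩ := Finset.mem_image.mp hmem
            unfold dil at hdil
            split_ifs at hdil <;> omega
  · intro hs
    have hs0 := h1.2.1 s hs
    have hsS : s ∈ trapCat (n1 + n2) l A := by
      rw [hSS]; exact Finset.mem_union_left _ hs
    rcases lt_trichotomy s 0 with hneg | rfl | hpos
    · have hc := mem_neg_colsum hA hsS hneg
      right
      refine ⟨s + 1, ⟨⟨by omega, by omega⟩, ?_⟩, ?_⟩
      · rw [hcs (s + 1) (by omega) (by omega), ← hcast]
        omega
      · rw [if_pos (by omega : s + 1 ≤ (0 : ℤ))]; ring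
    · left; rfl
    · have hc := mem_pos_colsum hA hsS hpos
      right
      refine ⟨s + l - 1, ⟨⟨by omega, by omega⟩, ?_⟩, ?_⟩
      · rw [hcs (s + l - 1) (by omega) (by omega), ← hcast]
        omega
      · rw [if_neg (by omega)]; ring

lemma splitCat2 (n1 n2 l : ℕ) (hl : 1 ≤ l) (A : ℤ → ℤ → ℤ) (S1 S2 : Finset ℤ)
    (h1 : IsCCS S1.card S1) (h2 : IsCCS S2.card S2)
    (hn1 : S1.card = n1 + 1) (hn2 : S2.card = n2 + 1)
    (hA : IsASTrap (n1 + n2) l A)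
    (hS : trapCat (n1 + n2) l A = ccsConcat S1 S2)
    (hband : ∀ j : ℤ, -(n1 : ℤ) + 1 ≤ j → j ≤ (l : ℤ) + n1 - 1 →
      ∑ i ∈ Finset.Icc ((n1 : ℤ) + 1) ((n1 : ℤ) + n2), A i j = 0) :
    trapCat n2 (l + 2 * n1) (fun i j => if 1 ≤ i then A (i + n1) (j - n1) else 0) = S2 := by
  have hcast : ((n1 + n2 : ℕ) : ℤ) = (n1 : ℤ) + n2 := by push_cast; ring
  have hSS : trapCat (n1 + n2) l A = S1 ∪ S2.image (dil (n1 : ℤ)) := by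
    rw [hS]; unfold ccsConcat
    rw [show ((S1.card : ℤ) - 1) = (n1 : ℤ) by omega]
  have hlowrows : ∀ j : ℤ, (j ≤ -(n1 : ℤ) ∨ (l : ℤ) + n1 ≤ j) →
      ∑ i ∈ Finset.Icc (1 : ℤ) ((n1 : ℤ) + (n2 : ℤ)), A i j
        = ∑ i ∈ Finset.Icc ((n1 : ℤ) + 1) ((n1 : ℤ) + n2), A i j := by
    intro j hj
    symm
    apply Finset.sum_subset
    · intro x hx
      rw [Finset.mem_Icc] at hx ⊢
      omega
    · intro x hx hnx
      rw [Finset.mem_Icc] at hx hnx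
      by_contra hne
      have := hA.1 x j hne
      rw [hcast] at this
      omega
  have hcs2 : ∀ j' : ℤ, ∑ i ∈ Finset.Icc (1 : ℤ) (n2 : ℤ),
      (if 1 ≤ i then A (i + n1) (j' - n1) else 0)
        = ∑ i ∈ Finset.Icc ((n1 : ℤ) + 1) ((n1 : ℤ) + n2), A i (j' - n1) := by
    intro j'
    rw [Finset.sum_congr rfl (fun i hi => if_pos (Finset.mem_Icc.mp hi).1)]
    have h' := sum_Icc_shiftZ (fun i => A i (j' - n1)) 1 (n2 : ℤ) (n1 : ℤ)
    rw [h', show ((1 : ℤ) + n1) = (n1 : ℤ) + 1 by ring,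
      show ((n2 : ℤ) + n1) = (n1 : ℤ) + n2 by ring]
  ext s
  simp only [trapCat, Finset.mem_insert, Finset.mem_image, Finset.mem_filter, Finset.mem_Icc]
  constructor
  · rintro (rfl | ⟨j', ⟨⟨hja, hjb⟩, hpos⟩, hm⟩)
    · exact ccs_zero_mem h2
    · rw [hcs2 j'] at hpos
      have hext : j' - (n1 : ℤ) ≤ -(n1 : ℤ) ∨ (l : ℤ) + n1 ≤ j' - n1 := by
        by_contra hcon
        push_neg at hcon
        rw [hband (j' - n1) (by omega) (by omega)] at hpos
        omega
      have hC : 0 < ∑ i ∈ Finset.Icc (1 : ℤ) (((n1 + n2 : ℕ)) : ℤ), A i (j' - n1) := by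
        rw [hcast, hlowrows (j' - n1) hext]
        exact hpos
      push_cast at hjb
      rcases hext with hlo | hhi
      · have hmem := trapCat_mem_low hA (j' - n1) (by omega) hC
        rw [hSS, Finset.mem_union] at hmem
        rcases hmem with hmem | hmem
        · exfalso
          have := h1.2.1 _ hmem
          omega
        · obtain ⟨x, hx, hdil⟩ := Finset.mem_image.mp hmem
          unfold dil at hdil
          split_ifs at hdil with hx1 hx2
          · omega
          · omega
          · rw [if_pos (by omega : j' ≤ (0 : ℤ))] at hm
            rw [← hm, show j' - 1 = x by omega]
            exact hx
      · have hmem := trapCat_mem_high hA (j' - n1) (by omega) hl hC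
        rw [hSS, Finset.mem_union] at hmem
        rcases hmem with hmem | hmem
        · exfalso
          have := h1.2.1 _ hmem
          omega
        · obtain ⟨x, hx, hdil⟩ := Finset.mem_image.mp hmem
          unfold dil at hdil
          split_ifs at hdil with hx1 hx2
          · rw [if_neg (by push_cast; omega : ¬(j' ≤ (0 : ℤ)))] at hm
            rw [← hm, show j' - (((l + 2 * n1 : ℕ) : ℤ) - 1) = x by push_cast; omega]
            exact hx
          · omega
          · omega
  · intro hs
    have hsb := h2.2.1 s hs
    rcases lt_trichotomy s 0 with hneg | rfl | hpos
    · have hsS : s - (n1 : ℤ) ∈ trapCat (n1 + n2) l A := by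
        rw [hSS]
        apply Finset.mem_union_right
        rw [Finset.mem_image]
        exact ⟨s, hs, by unfold dil; rw [if_neg (by omega), if_neg (by omega)]⟩
      have hc := mem_neg_colsum hA hsS (by omega)
      right
      refine ⟨s + 1, ⟨⟨by omega, by push_cast; omega⟩, ?_⟩, ?_⟩
      · rw [hcs2 (s + 1)]
        have hc2 := hc.2
        rw [hcast] at hc2
        rw [show s - (n1 : ℤ) + 1 = s + 1 - n1 by ring] at hc2
        rw [hlowrows (s + 1 - n1) (Or.inl (by omega))] at hc2
        omega
      · rw [if_pos (by omega : s + 1 ≤ (0 : ℤ))]; ring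
    · left; rfl
    · have hsS : s + (n1 : ℤ) ∈ trapCat (n1 + n2) l A := by
        rw [hSS]
        apply Finset.mem_union_right
        rw [Finset.mem_image]
        exact ⟨s, hs, by unfold dil; rw [if_pos (by omega)]⟩
      have hc := mem_pos_colsum hA hsS (by omega)
      have hc1 := hc.1
      rw [hcast] at hc1
      right
      refine ⟨s + ((l + 2 * n1 : ℕ) : ℤ) - 1, ⟨⟨by push_cast; omega, by push_cast; omega⟩, ?_⟩, ?_⟩
      · rw [hcs2 _]
        have hc2 := hc.2
        rw [hcast] at hc2
        rw [show s + ((l + 2 * n1 : ℕ) : ℤ) - 1 - (n1 : ℤ) = s + (n1 : ℤ) + l - 1 by push_cast; ring]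
        rw [hlowrows (s + (n1 : ℤ) + l - 1) (Or.inr (by omega))] at hc2
        omega
      · rw [if_neg (by push_cast; omega)]
        push_cast
        ring

end SplitCat


section ConcatCard

lemma concat_card {S1 S2 : Finset ℤ} (h1 : IsCCS S1.card S1) (h2 : IsCCS S2.card S2) :
    (ccsConcat S1 S2).card = S1.card + S2.card - 1 := by
  have hc1 := ccs_card_pos h1
  have hz1 := ccs_zero_mem h1
  have hz2 := ccs_zero_mem h2
  have hmono := dil_strictMono (show (0 : ℤ) ≤ (S1.card : ℤ) - 1 by
    have : (1 : ℤ) ≤ S1.card := by exact_mod_cast hc1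
    omega)
  unfold ccsConcat
  rw [Finset.card_union, Finset.card_image_of_injective _ hmono.injective]
  have hint : S1 ∩ S2.image (dil ((S1.card : ℤ) - 1)) = {0} := by
    ext x
    simp only [Finset.mem_inter, Finset.mem_image, Finset.mem_singleton]
    constructor
    · rintro ⟨hx1, y, hy, hdil⟩
      have hb := h1.2.1 x hx1
      unfold dil at hdil
      split_ifs at hdil <;> omega
    · rintro rfl
      exact ⟨hz1, 0, hz2, by unfold dil; simp⟩
  rw [hint]
  simp

end ConcatCard

/-- Splitting lemma: placing an `(|S2|-1, l+2|S1|-2)`-AS-trapezoid with centred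
Catalan set `S2` centred above an `(|S1|-1, l)`-AS-trapezoid with centred
Catalan set `S1` yields an `(|S1∘S2|-1, l)`-AS-trapezoid with centred Catalan
set `S1 ∘ S2`; conversely every such trapezoid arises uniquely in this way. -/
theorem stmt12 (l : ℕ) (hl : 1 ≤ l) (S1 S2 : Finset ℤ)
    (h1 : IsCCS S1.card S1) (h2 : IsCCS S2.card S2) :
    (∀ A1 A2 : ℤ → ℤ → ℤ,
      IsASTrap (S1.card - 1) l A1 → trapCat (S1.card - 1) l A1 = S1 →
      IsASTrap (S2.card - 1) (l + 2 * S1.card - 2) A2 →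
      trapCat (S2.card - 1) (l + 2 * S1.card - 2) A2 = S2 →
      IsASTrap ((ccsConcat S1 S2).card - 1) l (stack (S1.card - 1) A1 A2) ∧
        trapCat ((ccsConcat S1 S2).card - 1) l (stack (S1.card - 1) A1 A2)
          = ccsConcat S1 S2) ∧
    (∀ A : ℤ → ℤ → ℤ,
      IsASTrap ((ccsConcat S1 S2).card - 1) l A →
      trapCat ((ccsConcat S1 S2).card - 1) l A = ccsConcat S1 S2 →
      ∃! p : (ℤ → ℤ → ℤ) × (ℤ → ℤ → ℤ),
        IsASTrap (S1.card - 1) l p.1 ∧ trapCat (S1.card - 1) l p.1 = S1 ∧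
        IsASTrap (S2.card - 1) (l + 2 * S1.card - 2) p.2 ∧
        trapCat (S2.card - 1) (l + 2 * S1.card - 2) p.2 = S2 ∧
        A = stack (S1.card - 1) p.1 p.2) := by
  
  have hc1 := ccs_card_pos h1
  have hc2 := ccs_card_pos h2
  have hcc := concat_card h1 h2
  have hccs : (ccsConcat S1 S2).card - 1 = (S1.card - 1) + (S2.card - 1) := by omega
  have hl2 : l + 2 * S1.card - 2 = l + 2 * (S1.card - 1) := by omega
  set n1 := S1.card - 1 with hn1
  set n2 := S2.card - 1 with hn2
  have hn1' : S1.card = n1 + 1 := by omega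
  have hn2' : S2.card = n2 + 1 := by omega
  constructor
  · intro A1 A2 hA1 hA1c hA2 hA2c
    rw [hl2] at hA2 hA2c
    rw [hccs]
    constructor
    · exact stack_isASTrap n1 n2 l hl A1 A2 hA1 hA2
    · rw [stack_trapCat n1 n2 l hl A1 A2 hA1 hA2, hA1c, hA2c]
      unfold ccsConcat
      rw [show ((S1.card : ℤ) - 1) = (n1 : ℤ) by omega]
  · intro A hA hAc
    rw [hccs] at hA hAc
    have hband := bandZero n1 n2 l hl A S1 S2 h1 h2 hn1' hn2' hA hAc
    refine ⟨((fun i j => if i ≤ (n1 : ℤ) then A i j else 0),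
             (fun i j => if 1 ≤ i then A (i + n1) (j - n1) else 0)), ⟨?_, ?_, ?_, ?_, ?_⟩, ?_⟩
    · exact split_trap1 n1 n2 l hl A hA hband
    · exact splitCat1 n1 n2 l hl A S1 S2 h1 h2 hn1' hn2' hA hAc hband
    · rw [hl2]
      exact split_trap2 n1 n2 l hl A hA hband
    · rw [hl2]
      exact splitCat2 n1 n2 l hl A S1 S2 h1 h2 hn1' hn2' hA hAc hband
    · show A = stack n1 (fun i j => if i ≤ (n1 : ℤ) then A i j else 0)
        (fun i j => if 1 ≤ i then A (i + n1) (j - n1) else 0)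
      funext i j
      unfold stack
      by_cases hc : i ≤ (n1 : ℤ)
      · simp only [if_pos hc]
      · simp only [if_neg hc, if_pos (show 1 ≤ i - (n1 : ℤ) by omega),
          show i - (n1 : ℤ) + n1 = i by ring, show j + (n1 : ℤ) - n1 = j by ring]
    · rintro ⟨B1, B2⟩ ⟨hB1t, hB1c, hB2t, hB2c, hstack⟩
      have hB1 : B1 = fun i j => if i ≤ (n1 : ℤ) then A i j else 0 := by
        funext i j
        by_cases hc : i ≤ (n1 : ℤ)
        · rw [if_pos hc, hstack]
          unfold stack
          rw [if_pos hc]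
        · rw [if_neg hc]
          by_contra hne
          have := hB1t.1 i j hne
          omega
      have hB2 : B2 = fun i j => if 1 ≤ i then A (i + n1) (j - n1) else 0 := by
        funext i j
        by_cases hc : 1 ≤ i
        · rw [if_pos hc, hstack]
          unfold stack
          rw [if_neg (show ¬(i + (n1 : ℤ) ≤ n1) by omega),
            show i + (n1 : ℤ) - n1 = i by ring, show j - (n1 : ℤ) + n1 = j by ring]
        · rw [if_neg hc]
          by_contra hne
          have := hB2t.1 i j hne
          omega
      exact Prod.ext hB1 hB2
end
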